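/- arXiv:2104.02682 — 6 statements merged into one kernel-verified Lean document; each statement's English description precedes it below -/
import Mathlib

section
/- Let E be a complex Banach space and let f : ℂ → E be entire (complex differentiable on all of ℂ). Assume that for every integer k ≥ 1 there exists a constant C > 0 such that ‖f(z)‖ ≤ C·exp(|z|/k − k·|Im z|) for all z ∈ ℂ. Then f vanishes identically. -/
open Real Filter Complex Bornology

/-- Bound for `z` in the sector `|arg z| ≤ π/4`. -/
lemma aux_strip {E : Type*} [NormedAddCommGroup E] [NormedSpace ℂ E] (f : ℂ → E)
    (hd : Differentiable ℂ f) {C : ℝ}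
    (hbd : ∀ z : ℂ, |z.re| ≤ |z.im| → ‖f z‖ ≤ C)
    (hgrow : ∀ z : ℂ, ‖f z‖ ≤ C * Real.exp (‖z‖ / 2)) :
    ∀ w : ℂ, |w.im| ≤ π / 4 → ‖f (Complex.exp w)‖ ≤ C := by
  intro w hw
  have hC0 : 0 ≤ C := le_trans (norm_nonneg _) (hbd 0 (by simp))
  have h2 : π / (π / 4 - -(π / 4)) = 2 := by
    rw [show π / 4 - -(π / 4) = π / 2 by ring, div_div_eq_mul_div, mul_comm, mul_div_assoc,
      div_self Real.pi_ne_zero, mul_one]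
  refine PhragmenLindelof.horizontal_strip (a := -(π/4)) (b := π/4)
    (f := fun w => f (Complex.exp w)) ?_ ?_ ?_ ?_ (abs_le.1 hw).1 (abs_le.1 hw).2
  · exact (hd.comp Complex.differentiable_exp).diffContOnCl
  · refine ⟨1, by rw [h2]; norm_num, 1, Asymptotics.IsBigO.of_bound C ?_⟩
    filter_upwards with w'
    have h1 : ‖f (Complex.exp w')‖ ≤ C * Real.exp (Real.exp w'.re / 2) := by
      simpa [Complex.norm_exp] using hgrow (Complex.exp w')
    refine h1.trans ?_
    rw [Real.norm_eq_abs, Real.abs_exp, one_mul, one_mul]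
    gcongr
    calc Real.exp w'.re / 2 ≤ Real.exp w'.re := by
          have := Real.exp_pos w'.re; linarith
      _ ≤ Real.exp |w'.re| := Real.exp_le_exp.2 (le_abs_self _)
  · intro z hz
    apply hbd
    rw [Complex.exp_re, Complex.exp_im, hz, abs_mul, abs_mul, Real.abs_exp,
      Real.cos_neg, Real.sin_neg, abs_neg, Real.cos_pi_div_four, Real.sin_pi_div_four]
  · intro z hz
    apply hbd
    rw [Complex.exp_re, Complex.exp_im, hz, abs_mul, abs_mul, Real.abs_exp,
      Real.cos_pi_div_four, Real.sin_pi_div_four]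

lemma aux_arg (z : ℂ) (h0 : 0 < z.re) (him : |z.im| ≤ z.re) : |Complex.arg z| ≤ π / 4 := by
  have hz : z ≠ 0 := fun h => by simp [h] at h0
  have habs_pos : 0 < ‖z‖ := norm_pos_iff.mpr hz
  have hsq : Real.sqrt 2 * Real.sqrt 2 = 2 := Real.mul_self_sqrt (by norm_num)
  have hs2 : (0:ℝ) < Real.sqrt 2 := Real.sqrt_pos.2 (by norm_num)
  have habs_le : ‖z‖ ≤ Real.sqrt 2 * z.re := by
    rw [Complex.norm_def, Complex.normSq_apply]
    have h1 : z.re * z.re + z.im * z.im ≤ 2 * (z.re * z.re) := by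
      nlinarith [abs_nonneg z.im, abs_mul_abs_self z.im]
    calc Real.sqrt (z.re * z.re + z.im * z.im) ≤ Real.sqrt (2 * (z.re * z.re)) :=
          Real.sqrt_le_sqrt h1
      _ = Real.sqrt 2 * z.re := by
          rw [Real.sqrt_mul (by norm_num), Real.sqrt_mul_self h0.le]
  have hcos : Real.cos (π / 4) ≤ Real.cos (Complex.arg z) := by
    rw [Complex.cos_arg hz, Real.cos_pi_div_four]
    rw [div_le_div_iff₀ (by norm_num) habs_pos]
    nlinarith
  have harg2 : |Complex.arg z| ≤ π / 2 := Complex.abs_arg_le_pi_div_two_iff.2 h0.le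
  by_contra hlt
  push_neg at hlt
  have h4 : Real.cos |Complex.arg z| < Real.cos (π / 4) := by
    apply Real.strictAntiOn_cos ⟨by positivity, by linarith [Real.pi_pos]⟩
      ⟨abs_nonneg _, by linarith [Real.pi_pos]⟩ hlt
  rw [Real.cos_abs] at h4
  linarith

/-- If `f : ℂ → E` is entire with values in a complex Banach space and for every `k ≥ 1`
there is `C > 0` such that `‖f z‖ ≤ C · exp(|z|/k − k·|Im z|)` for all `z`, then `f = 0`. -/
theorem stmt0 {E : Type*} [NormedAddCommGroup E] [NormedSpace ℂ E] [CompleteSpace E]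
    (f : ℂ → E) (hf : ∀ z : ℂ, DifferentiableAt ℂ f z)
    (hb : ∀ k : ℕ, 1 ≤ k → ∃ C : ℝ, 0 < C ∧ ∀ z : ℂ,
      ‖f z‖ ≤ C * Real.exp (‖z‖ / k - k * |z.im|)) :
    ∀ z : ℂ, f z = 0 := by
  obtain ⟨C, hC0, hC⟩ := hb 2 (by norm_num)
  have hC' : ∀ z : ℂ, ‖f z‖ ≤ C * Real.exp (‖z‖ / 2 - 2 * |z.im|) := by
    intro z; have := hC z; push_cast at this; exact this
  have hd : Differentiable ℂ f := fun z => hf z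
  -- bound in the sectors around the imaginary axis
  have hbd : ∀ z : ℂ, |z.re| ≤ |z.im| → ‖f z‖ ≤ C := by
    intro z h
    have h1 : ‖z‖ / 2 - 2 * |z.im| ≤ 0 := by
      have := Complex.norm_le_abs_re_add_abs_im z
      nlinarith [abs_nonneg z.im]
    calc ‖f z‖ ≤ C * Real.exp (‖z‖ / 2 - 2 * |z.im|) := hC' z
      _ ≤ C * 1 := mul_le_mul_of_nonneg_left (Real.exp_le_one_iff.2 h1) hC0.le
      _ = C := mul_one C
  have hgrow : ∀ z : ℂ, ‖f z‖ ≤ C * Real.exp (‖z‖ / 2) := by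
    intro z
    refine (hC' z).trans ?_
    exact mul_le_mul_of_nonneg_left (Real.exp_le_exp.2 (by nlinarith [abs_nonneg z.im])) hC0.le
  -- f is bounded by C everywhere
  have hball : ∀ z : ℂ, ‖f z‖ ≤ C := by
    intro z
    rcases le_or_gt |z.re| |z.im| with h | h
    · exact hbd z h
    · have hre : z.re ≠ 0 := by
        intro h0; rw [h0] at h; simp at h; exact absurd h (abs_nonneg z.im).not_gt
      rcases hre.lt_or_gt with hneg | hpos
      · -- left sector: use f ∘ neg
        have hbd' : ∀ z : ℂ, |z.re| ≤ |z.im| → ‖f (-z)‖ ≤ C := by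
          intro u hu; apply hbd; simpa using hu
        have hgrow' : ∀ u : ℂ, ‖f (-u)‖ ≤ C * Real.exp (‖u‖ / 2) := by
          intro u; simpa using hgrow (-u)
        have harg : |Complex.arg (-z)| ≤ π / 4 := by
          apply aux_arg
          · simpa using hneg
          · rw [Complex.neg_im, Complex.neg_re, abs_neg]
            rw [abs_lt, abs_of_neg hneg] at h
            rw [abs_le]; constructor <;> linarith [h.1, h.2]
        have hz0 : (-z) ≠ 0 := by
          intro h0
          have : z.re = 0 := by
            have := congrArg Complex.re h0; simpa using this
          exact hre this
        have := aux_strip (fun u => f (-u)) (hd.comp differentiable_neg) hbd' hgrow'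
          (Complex.log (-z)) (by rw [Complex.log_im]; exact harg)
        rw [Complex.exp_log hz0] at this
        simpa using this
      · have harg : |Complex.arg z| ≤ π / 4 := by
          apply aux_arg z hpos
          rw [abs_of_pos hpos] at h
          exact h.le
        have hz0 : z ≠ 0 := fun h0 => hre (by simp [h0])
        have := aux_strip f hd hbd hgrow (Complex.log z)
          (by rw [Complex.log_im]; exact harg)
        rwa [Complex.exp_log hz0] at this
  -- Liouville + decay along the imaginary axis
  intro z
  have hrange : IsBounded (Set.range f) := by
    rw [isBounded_iff_forall_norm_le]
    exact ⟨C, by rintro x ⟨w, rfl⟩; exact hball w⟩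
  have heq : ∀ t : ℝ, f z = f (t * Complex.I) := fun t =>
    hd.apply_eq_apply_of_bounded hrange z (t * Complex.I)
  have hle : ∀ t : ℝ, 0 ≤ t → ‖f z‖ ≤ C * Real.exp (-(3 / 2) * t) := by
    intro t ht
    rw [heq t]
    have := hC' (t * Complex.I)
    have habs : ‖((t : ℂ) * Complex.I)‖ = |t| := by
      simp [map_mul]
    have him : ((t : ℂ) * Complex.I).im = t := by simp
    rw [habs, him, _root_.abs_of_nonneg ht] at this
    calc ‖f ((t:ℂ) * Complex.I)‖ ≤ C * Real.exp (t / 2 - 2 * t) := this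
      _ = C * Real.exp (-(3 / 2) * t) := by ring_nf
  have htend : Tendsto (fun t : ℝ => C * Real.exp (-(3 / 2) * t)) atTop (nhds 0) := by
    have h1 : Tendsto (fun t : ℝ => -(3 / 2) * t) atTop atBot := by
      apply tendsto_id.const_mul_atTop_of_neg (by norm_num)
    have := (Real.tendsto_exp_atBot.comp h1).const_mul C
    simpa using this
  have h0 : ‖f z‖ ≤ 0 :=
    ge_of_tendsto htend (eventually_atTop.2 ⟨0, fun t ht => hle t ht⟩)
  exact norm_le_zero_iff.1 h0
end

section
/- Let E be a complex Banach space and F : ℂ → E entire. Assume: (a) for every integer k ≥ 1 there is C > 0 with ‖F(z)‖ ≤ C·e^{|z|/k} for all z with Re z ≥ −k, and (b) for every integer k ≥ 1 there is C > 0 with ‖F(z)‖ ≤ C·e^{|z|/k − k|Re z|} for all z with Re z ≥ 1/k. Then for every integer k ≥ 1 there is C > 0 with ‖F(z)‖ ≤ C·e^{|z|/k − k|Re z|} for all z with Re z ≥ −k. -/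
/-- An entire Banach-valued function in `𝔏G_{[0,∞]}(E)` whose restriction to the right
half-plane lies in `LO_{{∞}}(E)` belongs to `𝔏G_{{∞}}(E)`. -/
theorem stmt1 {E : Type*} [NormedAddCommGroup E] [NormedSpace ℂ E] [CompleteSpace E]
    (F : ℂ → E) (hF : Differentiable ℂ F)
    (ha : ∀ k : ℕ, 1 ≤ k → ∃ C : ℝ, 0 < C ∧ ∀ z : ℂ, -(k : ℝ) ≤ z.re →
      ‖F z‖ ≤ C * Real.exp (‖z‖ / k))
    (hb : ∀ k : ℕ, 1 ≤ k → ∃ C : ℝ, 0 < C ∧ ∀ z : ℂ, 1 / (k : ℝ) ≤ z.re →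
      ‖F z‖ ≤ C * Real.exp (‖z‖ / k - k * |z.re|)) :
    ∀ k : ℕ, 1 ≤ k → ∃ C : ℝ, 0 < C ∧ ∀ z : ℂ, -(k : ℝ) ≤ z.re →
      ‖F z‖ ≤ C * Real.exp (‖z‖ / k - k * |z.re|) := by
  intro k hk
  obtain ⟨Ca, hCa, ha'⟩ := ha k hk
  obtain ⟨Cb, hCb, hb'⟩ := hb k hk
  refine ⟨Ca * Real.exp ((k : ℝ) ^ 2) + Cb, by positivity, ?_⟩
  intro z hz
  have hk1 : (1 : ℝ) ≤ k := by exact_mod_cast hk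
  have hexp := Real.exp_pos (‖z‖ / k - k * |z.re|)
  rcases le_or_gt (1 / (k : ℝ)) z.re with h | h
  · have := hb' z h
    nlinarith [mul_pos hCa (Real.exp_pos ((k : ℝ) ^ 2))]
  · have habs : |z.re| ≤ k := by
      rw [abs_le]
      constructor
      · linarith
      · have h1k : (1 : ℝ) / k ≤ k := by
          rw [div_le_iff₀ (by linarith)]; nlinarith
        linarith
    have h1 : ‖F z‖ ≤ Ca * Real.exp (‖z‖ / k) := ha' z hz
    have h2 : ‖z‖ / k ≤ (k : ℝ) ^ 2 + (‖z‖ / k - k * |z.re|) := by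
      nlinarith [abs_nonneg z.re]
    calc ‖F z‖ ≤ Ca * Real.exp (‖z‖ / k) := h1
      _ ≤ Ca * Real.exp ((k : ℝ) ^ 2 + (‖z‖ / k - k * |z.re|)) := by
          have := Real.exp_le_exp.mpr h2
          nlinarith
      _ = Ca * Real.exp ((k : ℝ) ^ 2) * Real.exp (‖z‖ / k - k * |z.re|) := by
          rw [Real.exp_add]; ring
      _ ≤ _ := by nlinarith
end

section
/- Let a ≤ b and c ≤ d be real numbers and n ≥ 1 an integer. Let z ∈ ℂ satisfy |Im z| < n and dist(z, [a+c, b+d]) > 1/n, and let w ∈ ℂ satisfy dist(w, [a,b]) = 1/(2n), where [s,t] denotes the segment {x + 0i : s ≤ x ≤ t} ⊆ ℂ and dist is the Euclidean distance from a point to a set. Then |Im(z − w)| < 2n and dist(z − w, [c,d]) > 1/(2n). -/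
/-- Translating a point `z` of the exterior region `S_n([a+c,b+d])` by a point `w` of the
contour `{w : dist(w,[a,b]) = 1/(2n)}` lands in the exterior region `S_{2n}([c,d])`. -/
theorem stmt9 (a b c d : ℝ) (hab : a ≤ b) (hcd : c ≤ d) (n : ℕ) (hn : 1 ≤ n)
    (z w : ℂ)
    (hz1 : |z.im| < (n : ℝ))
    (hz2 : 1 / (n : ℝ) <
      Metric.infDist z ((fun x : ℝ => (x : ℂ)) '' Set.Icc (a + c) (b + d)))
    (hw : Metric.infDist w ((fun x : ℝ => (x : ℂ)) '' Set.Icc a b) = 1 / (2 * (n : ℝ))) :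
    |(z - w).im| < 2 * (n : ℝ) ∧
      1 / (2 * (n : ℝ)) <
        Metric.infDist (z - w) ((fun x : ℝ => (x : ℂ)) '' Set.Icc c d) := by
  have hn1 : (1 : ℝ) ≤ (n : ℝ) := by exact_mod_cast hn
  have hnpos : (0 : ℝ) < (n : ℝ) := by linarith
  -- attain infDist of w on [a,b]
  have hcomp : IsCompact ((fun x : ℝ => (x : ℂ)) '' Set.Icc a b) :=
    (isCompact_Icc).image Complex.continuous_ofReal
  have hne : ((fun x : ℝ => (x : ℂ)) '' Set.Icc a b).Nonempty :=
    ⟨a, ⟨a, ⟨le_refl a, hab⟩, rfl⟩⟩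
  obtain ⟨y, hyA, hy⟩ := hcomp.exists_infDist_eq_dist hne w
  obtain ⟨y₀, hy₀, rfl⟩ := hyA
  have hwy : dist w (y₀ : ℂ) = 1 / (2 * (n : ℝ)) := by rw [← hy, hw]
  have hwim : |w.im| ≤ 1 / (2 * (n : ℝ)) := by
    have : |w.im| = |(w - (y₀ : ℂ)).im| := by simp
    rw [this, ← hwy]
    calc |(w - (y₀ : ℂ)).im| ≤ ‖w - (y₀ : ℂ)‖ := Complex.abs_im_le_norm _
    _ = dist w (y₀ : ℂ) := (Complex.dist_eq _ _).symm
  have hinv : 1 / (2 * (n : ℝ)) ≤ (n : ℝ) := by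
    rw [div_le_iff₀ (by linarith)]
    nlinarith
  constructor
  · have : |(z - w).im| ≤ |z.im| + |w.im| := by
      rw [Complex.sub_im]; exact abs_sub _ _
    linarith
  · -- attain infDist of z - w on [c,d]
    have hcomp2 : IsCompact ((fun x : ℝ => (x : ℂ)) '' Set.Icc c d) :=
      (isCompact_Icc).image Complex.continuous_ofReal
    have hne2 : ((fun x : ℝ => (x : ℂ)) '' Set.Icc c d).Nonempty :=
      ⟨c, ⟨c, ⟨le_refl c, hcd⟩, rfl⟩⟩
    obtain ⟨x, hxC, hx⟩ := hcomp2.exists_infDist_eq_dist hne2 (z - w)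
    obtain ⟨x₀, hx₀, rfl⟩ := hxC
    rw [hx]
    have hmem : ((y₀ + x₀ : ℝ) : ℂ) ∈ (fun x : ℝ => (x : ℂ)) '' Set.Icc (a + c) (b + d) :=
      ⟨y₀ + x₀, ⟨add_le_add hy₀.1 hx₀.1, add_le_add hy₀.2 hx₀.2⟩, rfl⟩
    have hzd : 1 / (n : ℝ) < dist z ((y₀ + x₀ : ℝ) : ℂ) :=
      lt_of_lt_of_le hz2 (Metric.infDist_le_dist_of_mem hmem)
    have htri : dist z ((y₀ + x₀ : ℝ) : ℂ) ≤ dist (z - w) (x₀ : ℂ) + dist w (y₀ : ℂ) := by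
      rw [Complex.dist_eq, Complex.dist_eq, Complex.dist_eq]
      have h1 : z - ((y₀ + x₀ : ℝ) : ℂ) = (z - w - (x₀ : ℂ)) + (w - (y₀ : ℂ)) := by
        push_cast; ring
      rw [h1]
      exact norm_add_le _ _
    have hhalf : 1 / (2 * (n : ℝ)) = 1 / (n : ℝ) - 1 / (2 * (n : ℝ)) := by
      field_simp; ring
    linarith
end

section
/- Let E be a complex Banach space, a ≤ b real numbers, and F : ℂ → E holomorphic on ℂ ∖ [a,b] and slowly increasing. Let (c_k)_{k≥0} be a sequence of complex numbers of exponential type 0. Then: (1) for every z ∈ ℂ ∖ [a,b] the series Σ_{k≥0} (c_k/k!)·(−i)^k·F^{(k)}(z) converges absolutely in E, where F^{(k)} denotes the k-th complex derivative of F on the open set ℂ ∖ [a,b]; (2) its sum G is holomorphic on ℂ ∖ [a,b] and slowly increasing; and (3) for every integer n ≥ 1 there exists a constant C > 0, depending only on n and on the sequence (c_k), such that ⦀G⦀_n ≤ C·⦀F⦀_{2n}. -/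
noncomputable section

/-- The segment `[a,b] = {x + 0i : a ≤ x ≤ b}` in `ℂ`. -/
def seg (a b : ℝ) : Set ℂ := (fun x : ℝ => (x : ℂ)) '' Set.Icc a b

/-- The exterior region `S_n([a,b]) = {z : |Im z| < n, dist(z,[a,b]) > 1/n}`. -/
def Sreg (a b : ℝ) (n : ℕ) : Set ℂ :=
  {z : ℂ | |z.im| < (n : ℝ) ∧ 1 / (n : ℝ) < Metric.infDist z (seg a b)}

/-- The weighted sup-norm `⦀F⦀_n = sup_{z ∈ S_n([a,b])} ‖F z‖ e^{−|Re z|/n}`. -/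
def wnorm {E : Type*} [NormedAddCommGroup E] (a b : ℝ) (n : ℕ) (F : ℂ → E) : ℝ :=
  sSup ((fun z => ‖F z‖ * Real.exp (-|z.re| / n)) '' Sreg a b n)

/-- `F` is holomorphic on `ℂ ∖ [a,b]` and slowly increasing: each weighted sup-norm
`⦀F⦀_n` is finite. -/
def SlowlyIncreasing {E : Type*} [NormedAddCommGroup E] [NormedSpace ℂ E]
    (a b : ℝ) (F : ℂ → E) : Prop :=
  DifferentiableOn ℂ F (seg a b)ᶜ ∧
    ∀ n : ℕ, 1 ≤ n →
      BddAbove ((fun z => ‖F z‖ * Real.exp (-|z.re| / n)) '' Sreg a b n)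

/-- A sequence of complex numbers of exponential type `0`. -/
def ExpTypeZero (c : ℕ → ℂ) : Prop :=
  ∀ ε : ℝ, 0 < ε → ∃ C : ℝ, 0 < C ∧ ∀ k : ℕ, ‖c k‖ ≤ C * ε ^ k

open Metric Complex Real

/-! ### Auxiliary lemmas -/

lemma seg_nonempty {a b : ℝ} (hab : a ≤ b) : (seg a b).Nonempty :=
  ⟨(a : ℂ), ⟨a, ⟨le_refl a, hab⟩, rfl⟩⟩

lemma isClosed_seg (a b : ℝ) : IsClosed (seg a b) :=
  (isCompact_Icc.image Complex.continuous_ofReal).isClosed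

/-- Cauchy estimate for iterated derivatives. -/
lemma cauchy_est {E : Type*} [NormedAddCommGroup E] [NormedSpace ℂ E] [CompleteSpace E]
    {F : ℂ → E} {z : ℂ} {r M : ℝ} (hr : 0 < r)
    (hd : DifferentiableOn ℂ F (closedBall z r))
    (hM : ∀ w ∈ closedBall z r, ‖F w‖ ≤ M) (k : ℕ) :
    ‖iteratedDeriv k F z‖ ≤ k.factorial * M / r ^ k := by
  have hM0 : 0 ≤ M := le_trans (norm_nonneg _) (hM z (mem_closedBall_self hr.le))
  lift r to NNReal using hr.le with R
  have hR : (0 : NNReal) < R := by exact_mod_cast hr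
  have hps := hd.hasFPowerSeriesOnBall hR
  set p := cauchyPowerSeries F z R with hp
  have hmem : ∀ θ : ℝ, circleMap z R θ ∈ closedBall z R := fun θ =>
    circleMap_mem_closedBall z (by exact_mod_cast hR.le) θ
  have hcont : Continuous fun θ : ℝ => ‖F (circleMap z R θ)‖ :=
    (hd.continuousOn.comp_continuous (continuous_circleMap z R) hmem).norm
  have hint : (∫ θ : ℝ in (0)..(2 * π), ‖F (circleMap z R θ)‖) ≤ 2 * π * M := by
    have := intervalIntegral.integral_mono_on (μ := MeasureTheory.volume)
      (f := fun θ : ℝ => ‖F (circleMap z R θ)‖) (g := fun _ : ℝ => M)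
      Real.two_pi_pos.le (hcont.intervalIntegrable 0 (2 * π))
      (intervalIntegrable_const) (fun θ _ => hM _ (hmem θ))
    simpa using this
  have hcoef : ‖p k‖ ≤ M * ((R : ℝ))⁻¹ ^ k := by
    refine le_trans (norm_cauchyPowerSeries_le F z R k) ?_
    rw [_root_.abs_of_nonneg (by positivity : (0:ℝ) ≤ (R:ℝ))]
    gcongr
    rw [inv_mul_le_iff₀ Real.two_pi_pos]
    exact hint
  have heq : iteratedDeriv k F z = k.factorial • (p k fun _ => (1 : ℂ)) := by
    rw [iteratedDeriv_eq_iteratedFDeriv, ← hps.factorial_smul (1 : ℂ) k]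
  have hnorm : ‖iteratedDeriv k F z‖ ≤ k.factorial * ‖p k‖ := by
    rw [heq, ← Nat.cast_smul_eq_nsmul ℝ, norm_smul, Real.norm_natCast]
    gcongr
    refine le_trans ((p k).le_opNorm _) ?_
    simp
  calc ‖iteratedDeriv k F z‖ ≤ k.factorial * (M * ((R : ℝ))⁻¹ ^ k) := by
        refine hnorm.trans ?_
        gcongr
      _ = k.factorial * M / (R : ℝ) ^ k := by
        rw [inv_pow]
        ring

lemma sreg_nonempty {a b : ℝ} (hab : a ≤ b) {n : ℕ} (hn : 1 ≤ n) :
    (Sreg a b n).Nonempty := by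
  have hn1 : (1 : ℝ) ≤ (n : ℝ) := by exact_mod_cast hn
  refine ⟨(a : ℂ) - 2, ?_, ?_⟩
  · simp only [Complex.sub_im, Complex.ofReal_im]
    norm_num
    linarith
  · have h2 : (2 : ℝ) ≤ Metric.infDist ((a : ℂ) - 2) (seg a b) := by
      by_contra h
      push_neg at h
      obtain ⟨y, hy, hdy⟩ := (Metric.infDist_lt_iff (seg_nonempty hab)).1 h
      obtain ⟨x, hx, rfl⟩ := hy
      have hre : |((a : ℂ) - 2 - x).re| ≤ ‖(a : ℂ) - 2 - x‖ :=
        Complex.abs_re_le_norm _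
      rw [Complex.dist_eq] at hdy
      have : ((a : ℂ) - 2 - x).re = a - 2 - x := by simp
      rw [this] at hre
      have hax : a ≤ x := hx.1
      have h2' : (2 : ℝ) ≤ |a - 2 - x| := by
        rw [abs_of_nonpos (by linarith)]
        linarith
      linarith
    calc 1 / (n : ℝ) ≤ 1 := by
          rw [div_le_one (by linarith)]; exact hn1
      _ < 2 := by norm_num
      _ ≤ _ := h2

lemma elt_le_wnorm {E : Type*} [NormedAddCommGroup E] {a b : ℝ} {n : ℕ} {F : ℂ → E}
    (hb : BddAbove ((fun z => ‖F z‖ * Real.exp (-|z.re| / n)) '' Sreg a b n))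
    {z : ℂ} (hz : z ∈ Sreg a b n) :
    ‖F z‖ * Real.exp (-|z.re| / n) ≤ wnorm a b n F :=
  le_csSup hb ⟨z, hz, rfl⟩

lemma wnorm_nonneg {E : Type*} [NormedAddCommGroup E] {a b : ℝ} (hab : a ≤ b) {n : ℕ}
    (hn : 1 ≤ n) {F : ℂ → E}
    (hb : BddAbove ((fun z => ‖F z‖ * Real.exp (-|z.re| / n)) '' Sreg a b n)) :
    0 ≤ wnorm a b n F := by
  obtain ⟨z, hz⟩ := sreg_nonempty hab hn
  exact le_trans (by positivity) (elt_le_wnorm hb hz)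

lemma exists_n {a b : ℝ} (hab : a ≤ b) {z : ℂ} (hz : z ∉ seg a b) :
    ∃ n : ℕ, 1 ≤ n ∧ |z.im| < (n : ℝ) ∧ 1 / (n : ℝ) < Metric.infDist z (seg a b) := by
  have hd : 0 < Metric.infDist z (seg a b) :=
    ((isClosed_seg a b).notMem_iff_infDist_pos (seg_nonempty hab)).1 hz
  obtain ⟨n, hn⟩ := exists_nat_gt (max |z.im| (1 / Metric.infDist z (seg a b)))
  have h1 : |z.im| < (n : ℝ) := lt_of_le_of_lt (le_max_left _ _) hn
  have h2 : 1 / Metric.infDist z (seg a b) < (n : ℝ) := lt_of_le_of_lt (le_max_right _ _) hn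
  have hn0 : (0 : ℝ) < (n : ℝ) := lt_of_le_of_lt (by positivity) h2
  refine ⟨n, by exact_mod_cast hn0, h1, ?_⟩
  exact (one_div_lt hn0 hd).2 h2

lemma iter_diff {E : Type*} [NormedAddCommGroup E] [NormedSpace ℂ E] [CompleteSpace E]
    {a b : ℝ} {F : ℂ → E} (hF : DifferentiableOn ℂ F (seg a b)ᶜ) (k : ℕ) :
    DifferentiableOn ℂ (iteratedDeriv k F) (seg a b)ᶜ := by
  induction k with
  | zero => simpa [iteratedDeriv_zero] using hF
  | succ k ih =>
      rw [iteratedDeriv_succ]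
      exact ((ih.analyticOnNhd (isClosed_seg a b).isOpen_compl).deriv).differentiableOn

/-- Key Cauchy-type estimate on the iterated derivatives of a slowly increasing function. -/
lemma iter_bound {E : Type*} [NormedAddCommGroup E] [NormedSpace ℂ E] [CompleteSpace E]
    {a b : ℝ} (hab : a ≤ b) {F : ℂ → E} (hF : SlowlyIncreasing a b F)
    {n : ℕ} (hn : 1 ≤ n) {z : ℂ}
    (h1 : |z.im| ≤ (n : ℝ) + 1 / (8 * n)) (h2 : 7 / (8 * (n : ℝ)) ≤ Metric.infDist z (seg a b))
    (k : ℕ) :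
    ‖iteratedDeriv k F z‖ ≤
      k.factorial * (wnorm a b (2 * n) F * Real.exp ((|z.re| + 1) / (2 * n)))
        / (1 / (8 * (n : ℝ))) ^ k := by
  have hn1 : (1 : ℝ) ≤ (n : ℝ) := by exact_mod_cast hn
  have hn0 : (0 : ℝ) < (n : ℝ) := by linarith
  set r : ℝ := 1 / (8 * (n : ℝ)) with hr_def
  have hr : 0 < r := by positivity
  have hcast : ((2 * n : ℕ) : ℝ) = 2 * (n : ℝ) := by push_cast; ring
  -- every point of the closed ball lies in `Sreg a b (2n)`
  have hball : ∀ w ∈ closedBall z r, w ∈ Sreg a b (2 * n) := by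
    intro w hw
    rw [mem_closedBall] at hw
    have him : |w.im - z.im| ≤ r := by
      calc |w.im - z.im| = |(w - z).im| := by simp
        _ ≤ ‖w - z‖ := Complex.abs_im_le_norm _
        _ = dist w z := (Complex.dist_eq w z).symm
        _ ≤ r := hw
    have hdist : Metric.infDist z (seg a b) ≤ Metric.infDist w (seg a b) + dist z w :=
      Metric.infDist_le_infDist_add_dist
    have hdzw : dist z w ≤ r := by rwa [dist_comm]
    constructor
    · rw [hcast]
      have : |w.im| ≤ |z.im| + r := by
        calc |w.im| ≤ |z.im| + |w.im - z.im| := by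
              have := abs_sub_abs_le_abs_sub w.im z.im
              linarith [abs_sub_abs_le_abs_sub w.im z.im]
          _ ≤ |z.im| + r := by linarith
      have hrle : r ≤ 1 / 8 := by
        rw [hr_def, div_le_div_iff₀ (by positivity) (by norm_num)]
        linarith
      calc |w.im| ≤ (n : ℝ) + 1 / (8 * n) + r := by linarith
        _ < 2 * (n : ℝ) := by
            have : 1 / (8 * (n : ℝ)) ≤ 1 / 8 := by
              rw [div_le_div_iff₀ (by positivity) (by norm_num)]; linarith
            linarith
    · rw [hcast]
      have : 7 / (8 * (n : ℝ)) - r ≤ Metric.infDist w (seg a b) := by linarith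
      calc 1 / (2 * (n : ℝ)) = 4 / (8 * (n : ℝ)) := by ring
        _ < 7 / (8 * (n : ℝ)) - r := by
            rw [hr_def]
            rw [div_sub_div_same, div_lt_div_iff₀ (by positivity) (by positivity)]
            ring_nf
            nlinarith
        _ ≤ _ := this
  -- the closed ball avoids the segment
  have hsub : closedBall z r ⊆ (seg a b)ᶜ := by
    intro w hw hwseg
    have := (hball w hw).2
    rw [Metric.infDist_zero_of_mem hwseg] at this
    have : (0 : ℝ) < 1 / ((2 * n : ℕ) : ℝ) := by rw [hcast]; positivity
    linarith [(hball w hw).2, Metric.infDist_zero_of_mem hwseg]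
  have hd : DifferentiableOn ℂ F (closedBall z r) := hF.1.mono hsub
  set M : ℝ := wnorm a b (2 * n) F with hM_def
  have hbdd := hF.2 (2 * n) (by omega)
  have hM0 : 0 ≤ M := wnorm_nonneg hab (by omega) hbdd
  have hMb : ∀ w ∈ closedBall z r, ‖F w‖ ≤ M * Real.exp ((|z.re| + 1) / (2 * n)) := by
    intro w hw
    have hwS := hball w hw
    have hle := elt_le_wnorm hbdd hwS
    have hre : |w.re| ≤ |z.re| + 1 := by
      rw [mem_closedBall] at hw
      have : |w.re - z.re| ≤ r := by
        calc |w.re - z.re| = |(w - z).re| := by simp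
          _ ≤ ‖w - z‖ := Complex.abs_re_le_norm _
          _ = dist w z := (Complex.dist_eq w z).symm
          _ ≤ r := hw
      have hr1 : r ≤ 1 := by
        rw [hr_def, div_le_one (by positivity)]; linarith
      have := abs_sub_abs_le_abs_sub w.re z.re
      linarith
    have hexp : Real.exp (|w.re| / (2 * (n : ℝ))) ≤ Real.exp ((|z.re| + 1) / (2 * n)) := by
      apply Real.exp_le_exp.2
      apply div_le_div_of_nonneg_right hre (by positivity) |>.trans_eq rfl
    have key : ‖F w‖ = (‖F w‖ * Real.exp (-|w.re| / ((2 * n : ℕ) : ℝ))) *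
        Real.exp (|w.re| / (2 * (n : ℝ))) := by
      rw [mul_assoc, ← Real.exp_add, hcast]
      ring_nf
      rw [Real.exp_zero, mul_one]
    rw [key]
    calc (‖F w‖ * Real.exp (-|w.re| / ((2 * n : ℕ) : ℝ))) * Real.exp (|w.re| / (2 * (n : ℝ)))
        ≤ M * Real.exp (|w.re| / (2 * (n : ℝ))) := by
          apply mul_le_mul_of_nonneg_right hle (Real.exp_nonneg _)
      _ ≤ M * Real.exp ((|z.re| + 1) / (2 * n)) := by
          apply mul_le_mul_of_nonneg_left hexp hM0
  exact cauchy_est hr hd hMb k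

/-- Bound on the individual terms of the series. -/
lemma term_bound {E : Type*} [NormedAddCommGroup E] [NormedSpace ℂ E] [CompleteSpace E]
    {a b : ℝ} (hab : a ≤ b) {F : ℂ → E} (hF : SlowlyIncreasing a b F)
    {c : ℕ → ℂ} {n : ℕ} (hn : 1 ≤ n) {Cn : ℝ} (hCn : 0 < Cn)
    (hCk : ∀ k : ℕ, ‖c k‖ ≤ Cn * (1 / (16 * (n : ℝ))) ^ k) {z : ℂ}
    (h1 : |z.im| ≤ (n : ℝ) + 1 / (8 * n)) (h2 : 7 / (8 * (n : ℝ)) ≤ Metric.infDist z (seg a b))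
    (k : ℕ) :
    ‖((c k / (Nat.factorial k : ℂ)) * (-Complex.I) ^ k) • iteratedDeriv k F z‖ ≤
      (Cn * (wnorm a b (2 * n) F * Real.exp ((|z.re| + 1) / (2 * n)))) * (1 / 2) ^ k := by
  have hn1 : (1 : ℝ) ≤ (n : ℝ) := by exact_mod_cast hn
  have hn0 : (0 : ℝ) < (n : ℝ) := by linarith
  have hk0 : (0 : ℝ) < (k.factorial : ℝ) := by exact_mod_cast k.factorial_pos
  set M : ℝ := wnorm a b (2 * n) F with hM_def
  have hM0 : 0 ≤ M := wnorm_nonneg hab (by omega) (hF.2 (2 * n) (by omega))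
  set Ez : ℝ := Real.exp ((|z.re| + 1) / (2 * n)) with hEz_def
  have hEz : 0 < Ez := Real.exp_pos _
  have hcoef : ‖(c k / (Nat.factorial k : ℂ)) * (-Complex.I) ^ k‖ =
      ‖c k‖ / (k.factorial : ℝ) := by
    rw [norm_mul, norm_div, norm_pow, norm_neg, Complex.norm_I, one_pow, mul_one]
    simp
  rw [norm_smul, hcoef]
  have hiter := iter_bound hab hF hn h1 h2 k
  calc ‖c k‖ / (k.factorial : ℝ) * ‖iteratedDeriv k F z‖
      ≤ (Cn * (1 / (16 * (n : ℝ))) ^ k / (k.factorial : ℝ)) *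
        (k.factorial * (M * Ez) / (1 / (8 * (n : ℝ))) ^ k) := by
        apply mul_le_mul
        · gcongr
          exact hCk k
        · exact hiter
        · exact norm_nonneg _
        · positivity
    _ = (Cn * (M * Ez)) * (((1 : ℝ) / (16 * (n : ℝ))) ^ k / ((1 : ℝ) / (8 * (n : ℝ))) ^ k) := by
        field_simp
    _ = (Cn * (M * Ez)) * (1 / 2) ^ k := by
        congr 1
        rw [← div_pow]
        congr 1
        field_simp
        ring

lemma summable_terms {E : Type*} [NormedAddCommGroup E] [NormedSpace ℂ E] [CompleteSpace E]
    {a b : ℝ} (hab : a ≤ b) {F : ℂ → E} (hF : SlowlyIncreasing a b F)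
    {c : ℕ → ℂ} {n : ℕ} (hn : 1 ≤ n) {Cn : ℝ} (hCn : 0 < Cn)
    (hCk : ∀ k : ℕ, ‖c k‖ ≤ Cn * (1 / (16 * (n : ℝ))) ^ k) {z : ℂ}
    (h1 : |z.im| ≤ (n : ℝ) + 1 / (8 * n)) (h2 : 7 / (8 * (n : ℝ)) ≤ Metric.infDist z (seg a b)) :
    Summable fun k : ℕ =>
      ‖((c k / (Nat.factorial k : ℂ)) * (-Complex.I) ^ k) • iteratedDeriv k F z‖ :=
  Summable.of_nonneg_of_le (fun _ => norm_nonneg _)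
    (term_bound hab hF hn hCn hCk h1 h2)
    (summable_geometric_two.mul_left _)

lemma tsum_bound {E : Type*} [NormedAddCommGroup E] [NormedSpace ℂ E] [CompleteSpace E]
    {a b : ℝ} (hab : a ≤ b) {F : ℂ → E} (hF : SlowlyIncreasing a b F)
    {c : ℕ → ℂ} {n : ℕ} (hn : 1 ≤ n) {Cn : ℝ} (hCn : 0 < Cn)
    (hCk : ∀ k : ℕ, ‖c k‖ ≤ Cn * (1 / (16 * (n : ℝ))) ^ k) {z : ℂ}
    (h1 : |z.im| ≤ (n : ℝ) + 1 / (8 * n)) (h2 : 7 / (8 * (n : ℝ)) ≤ Metric.infDist z (seg a b)) :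
    ‖∑' k : ℕ, ((c k / (Nat.factorial k : ℂ)) * (-Complex.I) ^ k) • iteratedDeriv k F z‖ ≤
      (Cn * (wnorm a b (2 * n) F * Real.exp ((|z.re| + 1) / (2 * n)))) * 2 := by
  have hsum := summable_terms hab hF hn hCn hCk h1 h2
  calc ‖∑' k : ℕ, ((c k / (Nat.factorial k : ℂ)) * (-Complex.I) ^ k) • iteratedDeriv k F z‖
      ≤ ∑' k : ℕ, ‖((c k / (Nat.factorial k : ℂ)) * (-Complex.I) ^ k) • iteratedDeriv k F z‖ :=
        norm_tsum_le_tsum_norm hsum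
    _ ≤ ∑' k : ℕ, (Cn * (wnorm a b (2 * n) F * Real.exp ((|z.re| + 1) / (2 * n)))) * (1 / 2) ^ k :=
        Summable.tsum_le_tsum (term_bound hab hF hn hCn hCk h1 h2) hsum
          (summable_geometric_two.mul_left _)
    _ = (Cn * (wnorm a b (2 * n) F * Real.exp ((|z.re| + 1) / (2 * n)))) * 2 := by
        rw [tsum_mul_left, tsum_geometric_two]

lemma sreg_hyps {a b : ℝ} {n : ℕ} (hn : 1 ≤ n) {z : ℂ} (hz : z ∈ Sreg a b n) :
    |z.im| ≤ (n : ℝ) + 1 / (8 * n) ∧ 7 / (8 * (n : ℝ)) ≤ Metric.infDist z (seg a b) := by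
  have hn1 : (1 : ℝ) ≤ (n : ℝ) := by exact_mod_cast hn
  have hn0 : (0 : ℝ) < (n : ℝ) := by linarith
  constructor
  · have := hz.1
    have hpos : (0 : ℝ) < 1 / (8 * n) := by positivity
    linarith
  · refine le_trans ?_ hz.2.le
    rw [div_le_div_iff₀ (by positivity) (by positivity)]
    nlinarith

lemma point_est {E : Type*} [NormedAddCommGroup E] [NormedSpace ℂ E] [CompleteSpace E]
    {a b : ℝ} (hab : a ≤ b) {F : ℂ → E} (hF : SlowlyIncreasing a b F)
    {c : ℕ → ℂ} {n : ℕ} (hn : 1 ≤ n) {Cn : ℝ} (hCn : 0 < Cn)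
    (hCk : ∀ k : ℕ, ‖c k‖ ≤ Cn * (1 / (16 * (n : ℝ))) ^ k) {z : ℂ}
    (hz : z ∈ Sreg a b n) :
    ‖∑' k : ℕ, ((c k / (Nat.factorial k : ℂ)) * (-Complex.I) ^ k) • iteratedDeriv k F z‖ *
        Real.exp (-|z.re| / n) ≤ 2 * Cn * Real.exp 1 * wnorm a b (2 * n) F := by
  have hn1 : (1 : ℝ) ≤ (n : ℝ) := by exact_mod_cast hn
  have hn0 : (0 : ℝ) < (n : ℝ) := by linarith
  obtain ⟨h1, h2⟩ := sreg_hyps hn hz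
  set M : ℝ := wnorm a b (2 * n) F with hM_def
  have hM0 : 0 ≤ M := wnorm_nonneg hab (by omega) (hF.2 (2 * n) (by omega))
  have hts := tsum_bound hab hF hn hCn hCk h1 h2
  have hEe : Real.exp ((|z.re| + 1) / (2 * n)) * Real.exp (-|z.re| / n) ≤ Real.exp 1 := by
    rw [← Real.exp_add]
    apply Real.exp_le_exp.2
    have heq : (|z.re| + 1) / (2 * (n : ℝ)) + (-|z.re| / n) = (1 - |z.re|) / (2 * n) := by
      field_simp
      ring
    rw [heq]
    rw [div_le_one (by positivity)]
    nlinarith [abs_nonneg z.re]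
  calc ‖∑' k : ℕ, ((c k / (Nat.factorial k : ℂ)) * (-Complex.I) ^ k) • iteratedDeriv k F z‖ *
        Real.exp (-|z.re| / n)
      ≤ ((Cn * (M * Real.exp ((|z.re| + 1) / (2 * n)))) * 2) * Real.exp (-|z.re| / n) :=
        mul_le_mul_of_nonneg_right hts (Real.exp_nonneg _)
    _ = (2 * Cn * M) * (Real.exp ((|z.re| + 1) / (2 * n)) * Real.exp (-|z.re| / n)) := by ring
    _ ≤ (2 * Cn * M) * Real.exp 1 := by
        apply mul_le_mul_of_nonneg_left hEe (by positivity)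
    _ = 2 * Cn * Real.exp 1 * M := by ring

lemma ball_hyps {a b : ℝ} {n : ℕ} (hn : 1 ≤ n) {z : ℂ} (him : |z.im| < (n : ℝ))
    (hdist : 1 / (n : ℝ) < Metric.infDist z (seg a b)) {w : ℂ}
    (hw : w ∈ Metric.ball z (1 / (8 * (n : ℝ)))) :
    |w.im| ≤ (n : ℝ) + 1 / (8 * n) ∧ 7 / (8 * (n : ℝ)) ≤ Metric.infDist w (seg a b) := by
  have hn1 : (1 : ℝ) ≤ (n : ℝ) := by exact_mod_cast hn
  have hn0 : (0 : ℝ) < (n : ℝ) := by linarith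
  rw [Metric.mem_ball] at hw
  have him' : |w.im - z.im| ≤ dist w z := by
    calc |w.im - z.im| = |(w - z).im| := by simp
      _ ≤ ‖w - z‖ := Complex.abs_im_le_norm _
      _ = dist w z := (Complex.dist_eq w z).symm
  have htri : Metric.infDist z (seg a b) ≤ Metric.infDist w (seg a b) + dist z w :=
    Metric.infDist_le_infDist_add_dist
  have hdzw : dist z w < 1 / (8 * (n : ℝ)) := by rwa [dist_comm]
  constructor
  · have := abs_sub_abs_le_abs_sub w.im z.im
    linarith
  · have h78 : 7 / (8 * (n : ℝ)) = 1 / (n : ℝ) - 1 / (8 * (n : ℝ)) := by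
      field_simp
      ring
    linarith

/-- The infinite-order differential operator `P(−i∂) = Σ (c_k/k!)(−i)^k ∂^k` maps slowly
increasing holomorphic functions on `ℂ ∖ [a,b]` to slowly increasing holomorphic functions,
the defining series converging absolutely, with `⦀P(−i∂)F⦀_n ≤ C·⦀F⦀_{2n}` for a constant `C`
depending only on `n` and on the coefficient sequence. -/
theorem stmt11 {E : Type*} [NormedAddCommGroup E] [NormedSpace ℂ E] [CompleteSpace E]
    (a b : ℝ) (hab : a ≤ b) (c : ℕ → ℂ) (hc : ExpTypeZero c) :
    (∀ F : ℂ → E, SlowlyIncreasing a b F → ∀ z ∉ seg a b,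
      Summable fun k : ℕ =>
        ‖((c k / (Nat.factorial k : ℂ)) * (-Complex.I) ^ k) • iteratedDeriv k F z‖) ∧
    (∀ F : ℂ → E, SlowlyIncreasing a b F →
      SlowlyIncreasing a b fun z =>
        ∑' k : ℕ, ((c k / (Nat.factorial k : ℂ)) * (-Complex.I) ^ k) • iteratedDeriv k F z) ∧
    (∀ n : ℕ, 1 ≤ n → ∃ C : ℝ, 0 < C ∧ ∀ F : ℂ → E, SlowlyIncreasing a b F →
      wnorm a b n (fun z =>
          ∑' k : ℕ, ((c k / (Nat.factorial k : ℂ)) * (-Complex.I) ^ k) • iteratedDeriv k F z) ≤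
        C * wnorm a b (2 * n) F) := by
  have hCn : ∀ n : ℕ, 1 ≤ n → ∃ Cn : ℝ, 0 < Cn ∧
      ∀ k : ℕ, ‖c k‖ ≤ Cn * (1 / (16 * (n : ℝ))) ^ k := by
    intro n hn
    have hn0 : (0 : ℝ) < (n : ℝ) := by exact_mod_cast hn
    exact hc (1 / (16 * (n : ℝ))) (by positivity)
  refine ⟨?_, ?_, ?_⟩
  · -- (1) absolute convergence
    intro F hF z hz
    obtain ⟨n, hn, him, hdist⟩ := exists_n hab hz
    obtain ⟨Cn, hCn0, hCk⟩ := hCn n hn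
    obtain ⟨h1, h2⟩ := sreg_hyps hn ⟨him, hdist⟩
    exact summable_terms hab hF hn hCn0 hCk h1 h2
  · -- (2) the sum is slowly increasing
    intro F hF
    constructor
    · -- differentiability
      intro z hz
      obtain ⟨n, hn, him, hdist⟩ := exists_n hab hz
      have hn1 : (1 : ℝ) ≤ (n : ℝ) := by exact_mod_cast hn
      have hn0 : (0 : ℝ) < (n : ℝ) := by linarith
      obtain ⟨Cn, hCn0, hCk⟩ := hCn n hn
      have hρ : (0 : ℝ) < 1 / (8 * (n : ℝ)) := by positivity
      have hM0 : 0 ≤ wnorm a b (2 * n) F :=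
        wnorm_nonneg hab (by omega) (hF.2 (2 * n) (by omega))
      have hsub : Metric.ball z (1 / (8 * (n : ℝ))) ⊆ (seg a b)ᶜ := by
        intro w hw hwseg
        have := (ball_hyps hn him hdist hw).2
        rw [Metric.infDist_zero_of_mem hwseg] at this
        have h7 : (0 : ℝ) < 7 / (8 * (n : ℝ)) := by positivity
        linarith
      have hdOn : DifferentiableOn ℂ
          (fun w => ∑' k : ℕ, ((c k / (Nat.factorial k : ℂ)) * (-Complex.I) ^ k) •
            iteratedDeriv k F w) (Metric.ball z (1 / (8 * (n : ℝ)))) := by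
        apply Complex.differentiableOn_tsum_of_summable_norm
          (u := fun k : ℕ => (Cn * (wnorm a b (2 * n) F *
            Real.exp ((|z.re| + 2) / (2 * n)))) * (1 / 2) ^ k)
          (summable_geometric_two.mul_left _)
          (fun k => ((iter_diff hF.1 k).mono hsub).const_smul _)
          Metric.isOpen_ball
        intro k w hw
        obtain ⟨h1, h2⟩ := ball_hyps hn him hdist hw
        refine (term_bound hab hF hn hCn0 hCk h1 h2 k).trans ?_
        have hre : |w.re| ≤ |z.re| + 1 := by
          rw [Metric.mem_ball] at hw
          have : |w.re - z.re| ≤ dist w z := by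
            calc |w.re - z.re| = |(w - z).re| := by simp
              _ ≤ ‖w - z‖ := Complex.abs_re_le_norm _
              _ = dist w z := (Complex.dist_eq w z).symm
          have hr1 : 1 / (8 * (n : ℝ)) ≤ 1 := by
            rw [div_le_one (by positivity)]; linarith
          have := abs_sub_abs_le_abs_sub w.re z.re
          linarith
        have hexp : Real.exp ((|w.re| + 1) / (2 * (n : ℝ))) ≤
            Real.exp ((|z.re| + 2) / (2 * (n : ℝ))) := by
          apply Real.exp_le_exp.2
          rw [div_le_div_iff₀ (by positivity) (by positivity)]
          nlinarith
        exact mul_le_mul_of_nonneg_right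
          (mul_le_mul_of_nonneg_left (mul_le_mul_of_nonneg_left hexp hM0) hCn0.le)
          (by positivity)
      exact ((hdOn.differentiableAt (Metric.isOpen_ball.mem_nhds
        (Metric.mem_ball_self hρ))).differentiableWithinAt)
    · -- boundedness
      intro m hm
      obtain ⟨Cm, hCm0, hCk⟩ := hCn m hm
      refine ⟨2 * Cm * Real.exp 1 * wnorm a b (2 * m) F, ?_⟩
      rintro x ⟨z, hz, rfl⟩
      exact point_est hab hF hm hCm0 hCk hz
  · -- (3) the norm estimate
    intro n hn
    obtain ⟨Cn, hCn0, hCk⟩ := hCn n hn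
    refine ⟨2 * Cn * Real.exp 1, by positivity, ?_⟩
    intro F hF
    apply Real.sSup_le
    · rintro x ⟨z, hz, rfl⟩
      exact point_est hab hF hn hCn0 hCk hz
    · have hM0 : 0 ≤ wnorm a b (2 * n) F :=
        wnorm_nonneg hab (by omega) (hF.2 (2 * n) (by omega))
      positivity

end
end

section
/- Let E be a complex Banach space, a ≤ b real numbers, and F : ℂ → E holomorphic on ℂ ∖ [a,b] and slowly increasing. For c > 0 define ℱ_c F(ζ) := ∫_{γ_{a,b,c}} F(z)·e^{−izζ} dz, the contour integral along the stadium contour γ_{a,b,c}. Then: (1) the value ℱ_c F(ζ) is independent of c, i.e. ℱ_c F(ζ) = ℱ_{c'} F(ζ) for all c, c' > 0 and all ζ ∈ ℂ; (2) the function ζ ↦ ℱ_c F(ζ) is entire; and (3) for every integer k ≥ 1 there exists a constant C > 0 such that ‖ℱ_c F(ζ)‖ ≤ C·e^{|ζ|/k + H_{[a,b]}(Im ζ)} for all ζ ∈ ℂ. -/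
noncomputable section

open Real

/-- The contour integral of `Φ` along the clockwise boundary of the `r`-neighbourhood of the
segment `[a,b]` (a "stadium"): the segment from `a+ir` to `b+ir`, the right semicircle from
`b+ir` to `b−ir`, the segment from `b−ir` to `a−ir`, and the left semicircle from `a−ir`
(angle `3π/2`) up to `a+ir` (angle `π/2`). -/
def stadiumIntegral {E : Type*} [NormedAddCommGroup E] [NormedSpace ℂ E]
    (a b r : ℝ) (Φ : ℂ → E) : E :=
  (∫ t in a..b, Φ ((t : ℂ) + (r : ℂ) * Complex.I)) +
  (∫ θ in (π / 2)..(-(π / 2)),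
    ((r : ℂ) * Complex.I * Complex.exp ((θ : ℂ) * Complex.I)) •
      Φ ((b : ℂ) + (r : ℂ) * Complex.exp ((θ : ℂ) * Complex.I))) +
  (∫ t in b..a, Φ ((t : ℂ) - (r : ℂ) * Complex.I)) +
  (∫ θ in (3 * π / 2)..(π / 2),
    ((r : ℂ) * Complex.I * Complex.exp ((θ : ℂ) * Complex.I)) •
      Φ ((a : ℂ) + (r : ℂ) * Complex.exp ((θ : ℂ) * Complex.I)))

/-- The Fourier transform `ℱ_r F(ζ) = ∫_{γ_{a,b,r}} e^{−izζ} F(z) dz` of a slowly increasing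
function holomorphic outside `[a,b]`, along the stadium contour of radius `r`. -/
def fourierCpt {E : Type*} [NormedAddCommGroup E] [NormedSpace ℂ E]
    (a b r : ℝ) (F : ℂ → E) (ζ : ℂ) : E :=
  stadiumIntegral a b r fun z => Complex.exp (-(Complex.I * z * ζ)) • F z

namespace Stmt13Aux

open Complex Metric Set intervalIntegral

set_option linter.unusedSectionVars false

lemma mem_seg_iff {a b : ℝ} {z : ℂ} :
    z ∈ seg a b ↔ z.im = 0 ∧ z.re ∈ Set.Icc a b := by
  constructor
  · rintro ⟨x, hx, rfl⟩; simpa using hx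
  · rintro ⟨h1, h2⟩
    exact ⟨z.re, h2, by simp [Complex.ext_iff, h1.symm]⟩

lemma isOpen_compl_seg (a b : ℝ) : IsOpen (seg a b)ᶜ :=
  ((isCompact_Icc.image Complex.continuous_ofReal).isClosed).isOpen_compl

lemma hasDerivAt_ofReal (t : ℝ) : HasDerivAt (fun r : ℝ => (r : ℂ)) 1 t := by
  exact Complex.ofRealCLM.hasDerivAt (x := t)

lemma hasDerivAt_intervalIntegral_of_continuousOn
    {𝕜 : Type*} [RCLike 𝕜] {E : Type*} [NormedAddCommGroup E] [NormedSpace ℝ E]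
    [NormedSpace 𝕜 E] {f f' : 𝕜 → ℝ → E} {x₀ : 𝕜} {α β ε : ℝ} (hε : 0 < ε)
    (hf : ContinuousOn (fun p : 𝕜 × ℝ => f p.1 p.2) (Metric.closedBall x₀ ε ×ˢ Set.uIcc α β))
    (hf' : ContinuousOn (fun p : 𝕜 × ℝ => f' p.1 p.2) (Metric.closedBall x₀ ε ×ˢ Set.uIcc α β))
    (hd : ∀ t ∈ Set.uIcc α β, ∀ x ∈ Metric.ball x₀ ε, HasDerivAt (fun x => f x t) (f' x t) x) :
    HasDerivAt (fun x => ∫ t in α..β, f x t) (∫ t in α..β, f' x₀ t) x₀ := by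
  obtain ⟨M, hM⟩ :=
    ((isCompact_closedBall x₀ ε).prod isCompact_uIcc).exists_bound_of_continuousOn hf'
  have key : ∀ x ∈ Metric.closedBall x₀ ε, ContinuousOn (fun t => f x t) (Set.uIcc α β) := by
    intro x hx
    exact hf.comp (by fun_prop) (fun t ht => Set.mk_mem_prod hx ht)
  have key' : ∀ x ∈ Metric.closedBall x₀ ε, ContinuousOn (fun t => f' x t) (Set.uIcc α β) := by
    intro x hx
    exact hf'.comp (by fun_prop) (fun t ht => Set.mk_mem_prod hx ht)
  have hx₀ : x₀ ∈ Metric.closedBall x₀ ε := Metric.mem_closedBall_self hε.le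
  refine (intervalIntegral.hasDerivAt_integral_of_dominated_loc_of_deriv_le (Metric.ball_mem_nhds x₀ hε) ?_ ?_ ?_
    (bound := fun _ => M) ?_ ?_ ?_).2
  · filter_upwards [Metric.closedBall_mem_nhds x₀ hε] with x hx
    exact ((key x hx).mono Set.uIoc_subset_uIcc).aestronglyMeasurable measurableSet_uIoc
  · exact (key x₀ hx₀).intervalIntegrable
  · exact ((key' x₀ hx₀).mono Set.uIoc_subset_uIcc).aestronglyMeasurable measurableSet_uIoc
  · refine MeasureTheory.ae_of_all _ fun t ht x hx => ?_
    exact hM (x, t) (Set.mk_mem_prod (Metric.ball_subset_closedBall hx)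
      (Set.uIoc_subset_uIcc ht))
  · exact intervalIntegrable_const
  · exact MeasureTheory.ae_of_all _ fun t ht x hx => hd t (Set.uIoc_subset_uIcc ht) x hx

lemma not_mem_seg_of_im {a b : ℝ} {z : ℂ} (h : z.im ≠ 0) : z ∉ seg a b := by
  rw [mem_seg_iff]; tauto

lemma top_not_mem {a b r t : ℝ} (hr : r ≠ 0) : (t:ℂ) + (r:ℂ) * Complex.I ∉ seg a b :=
  not_mem_seg_of_im (by simpa using hr)

lemma bot_not_mem {a b r t : ℝ} (hr : r ≠ 0) : (t:ℂ) - (r:ℂ) * Complex.I ∉ seg a b :=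
  not_mem_seg_of_im (by simpa using hr)

lemma circ_right_not_mem {a b r θ : ℝ} (hr : 0 < r) (hθ : θ ∈ Set.uIcc (π/2) (-(π/2))) :
    (b:ℂ) + (r:ℂ) * Complex.exp ((θ:ℂ) * Complex.I) ∉ seg a b := by
  intro h
  rw [mem_seg_iff] at h
  obtain ⟨h1, h2⟩ := h
  have him : Real.sin θ = 0 := by
    have : r * Real.sin θ = 0 := by
      simpa [Complex.exp_ofReal_mul_I_re, Complex.exp_ofReal_mul_I_im] using h1
    exact (mul_eq_zero.1 this).resolve_left hr.ne'
  have hθ' : θ ∈ Set.Icc (-(π/2)) (π/2) := by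
    rwa [Set.uIcc_of_ge (by linarith [Real.pi_pos] : -(π/2) ≤ π/2)] at hθ
  have hcos : 0 ≤ Real.cos θ := Real.cos_nonneg_of_mem_Icc hθ'
  have hsq : Real.cos θ = 1 := by
    have := Real.sin_sq_add_cos_sq θ
    rw [him] at this
    nlinarith
  have hre : ((b:ℂ) + (r:ℂ) * Complex.exp ((θ:ℂ) * Complex.I)).re = b + r := by
    simp [Complex.exp_ofReal_mul_I_re, Complex.exp_ofReal_mul_I_im, hsq]
  rw [hre] at h2
  linarith [h2.2]

lemma circ_left_not_mem {a b r θ : ℝ} (hr : 0 < r) (hθ : θ ∈ Set.uIcc (3*π/2) (π/2)) :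
    (a:ℂ) + (r:ℂ) * Complex.exp ((θ:ℂ) * Complex.I) ∉ seg a b := by
  intro h
  rw [mem_seg_iff] at h
  obtain ⟨h1, h2⟩ := h
  have him : Real.sin θ = 0 := by
    have : r * Real.sin θ = 0 := by
      simpa [Complex.exp_ofReal_mul_I_re, Complex.exp_ofReal_mul_I_im] using h1
    exact (mul_eq_zero.1 this).resolve_left hr.ne'
  have hθ' : θ ∈ Set.Icc (π/2) (3*π/2) := by
    have hle : π/2 ≤ 3*π/2 := by linarith [Real.pi_pos]
    rwa [Set.uIcc_of_ge hle] at hθ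
  have hcos : Real.cos θ ≤ 0 :=
    Real.cos_nonpos_of_pi_div_two_le_of_le hθ'.1 (by linarith [hθ'.2])
  have hsq : Real.cos θ = -1 := by
    have := Real.sin_sq_add_cos_sq θ
    rw [him] at this
    nlinarith
  have hre : ((a:ℂ) + (r:ℂ) * Complex.exp ((θ:ℂ) * Complex.I)).re = a - r := by
    simp [Complex.exp_ofReal_mul_I_re, Complex.exp_ofReal_mul_I_im, hsq]
    ring
  rw [hre] at h2
  linarith [h2.1]

lemma exp_pi_div_two : Complex.exp (((π/2 : ℝ):ℂ) * Complex.I) = Complex.I := by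
  rw [Complex.exp_mul_I, ← Complex.ofReal_cos, ← Complex.ofReal_sin]
  simp

lemma exp_neg_pi_div_two : Complex.exp (((-(π/2) : ℝ):ℂ) * Complex.I) = -Complex.I := by
  rw [Complex.exp_mul_I, ← Complex.ofReal_cos, ← Complex.ofReal_sin]
  simp

lemma exp_three_pi_div_two : Complex.exp (((3*π/2 : ℝ):ℂ) * Complex.I) = -Complex.I := by
  have h : (3*π/2 : ℝ) = π + π/2 := by ring
  rw [Complex.exp_mul_I, ← Complex.ofReal_cos, ← Complex.ofReal_sin, h,
    Real.cos_add, Real.sin_add]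
  simp


variable {E : Type*} [NormedAddCommGroup E] [NormedSpace ℂ E] [CompleteSpace E]
  {a b : ℝ} {Φ : ℂ → E}

lemma contOn_comp {α : Type*} [TopologicalSpace α] {G : ℂ → E} {s : Set α} {g : α → ℂ}
    (hG : ContinuousOn G (seg a b)ᶜ) (hg : Continuous g) (hmem : ∀ p ∈ s, g p ∉ seg a b) :
    ContinuousOn (fun p => G (g p)) s :=
  hG.comp hg.continuousOn hmem

lemma pos_of_mem_cb {r : ℝ} (hr : 0 < r) {s : ℝ} (hs : s ∈ Metric.closedBall r (r/2)) :
    0 < s := by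
  rw [Metric.mem_closedBall, Real.dist_eq] at hs
  rcases abs_le.1 hs with ⟨h1, _⟩; linarith

section
variable (hΦ : DifferentiableOn ℂ Φ (seg a b)ᶜ)

lemma hHD (hΦ : DifferentiableOn ℂ Φ (seg a b)ᶜ) {z : ℂ} (hz : z ∉ seg a b) :
    HasDerivAt Φ (deriv Φ z) z :=
  (hΦ.differentiableAt ((isOpen_compl_seg a b).mem_nhds hz)).hasDerivAt

lemma hDc (hΦ : DifferentiableOn ℂ Φ (seg a b)ᶜ) :
    ContinuousOn (deriv Φ) (seg a b)ᶜ :=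
  ((hΦ.analyticOnNhd (isOpen_compl_seg a b)).deriv).continuousOn

lemma hasDerivAt_top (hΦ : DifferentiableOn ℂ Φ (seg a b)ᶜ) {r : ℝ} (hr : 0 < r) :
    HasDerivAt (fun s : ℝ => ∫ t in a..b, Φ ((t:ℂ) + (s:ℂ) * Complex.I))
      (Complex.I • (Φ ((b:ℂ) + (r:ℂ)*Complex.I) - Φ ((a:ℂ) + (r:ℂ)*Complex.I))) r := by
  have key := hasDerivAt_intervalIntegral_of_continuousOn (𝕜 := ℝ) (x₀ := r) (ε := r/2)
    (α := a) (β := b)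
    (f := fun s t => Φ ((t:ℂ) + (s:ℂ)*Complex.I))
    (f' := fun s t => Complex.I • deriv Φ ((t:ℂ) + (s:ℂ)*Complex.I)) (half_pos hr)
    (contOn_comp hΦ.continuousOn (by fun_prop)
      (fun p hp => top_not_mem (pos_of_mem_cb hr hp.1).ne'))
    ((contOn_comp (hDc hΦ) (by fun_prop)
        (fun p hp => top_not_mem (pos_of_mem_cb hr hp.1).ne')).const_smul Complex.I)
    (fun t _ s hs => by
      have hmem : (t:ℂ) + (s:ℂ)*Complex.I ∉ seg a b :=
        top_not_mem (pos_of_mem_cb hr (Metric.ball_subset_closedBall hs)).ne'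
      have hin : HasDerivAt (fun s : ℝ => (t:ℂ) + (s:ℂ)*Complex.I) (1 * Complex.I) s :=
        ((hasDerivAt_ofReal s).mul_const Complex.I).const_add _
      simpa [Function.comp_def] using (hHD hΦ hmem).scomp_of_eq s hin rfl)
  have hval : (∫ t in a..b, Complex.I • deriv Φ ((t:ℂ) + (r:ℂ)*Complex.I))
      = Complex.I • (Φ ((b:ℂ) + (r:ℂ)*Complex.I) - Φ ((a:ℂ) + (r:ℂ)*Complex.I)) := by
    rw [intervalIntegral.integral_smul]
    congr 1
    refine intervalIntegral.integral_eq_sub_of_hasDerivAt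
      (f := fun t : ℝ => Φ ((t:ℂ) + (r:ℂ)*Complex.I)) (fun t _ => ?_) ?_
    · have hin : HasDerivAt (fun t : ℝ => (t:ℂ) + (r:ℂ)*Complex.I) 1 t :=
        (hasDerivAt_ofReal t).add_const _
      simpa [Function.comp_def] using (hHD hΦ (top_not_mem (a := a) (b := b) hr.ne' (t := t))).scomp_of_eq t hin rfl
    · exact (contOn_comp (hDc hΦ) (by fun_prop)
        (fun t _ => top_not_mem hr.ne')).intervalIntegrable
  rwa [hval] at key

lemma hasDerivAt_bot (hΦ : DifferentiableOn ℂ Φ (seg a b)ᶜ) {r : ℝ} (hr : 0 < r) :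
    HasDerivAt (fun s : ℝ => ∫ t in b..a, Φ ((t:ℂ) - (s:ℂ) * Complex.I))
      ((-Complex.I) • (Φ ((a:ℂ) - (r:ℂ)*Complex.I) - Φ ((b:ℂ) - (r:ℂ)*Complex.I))) r := by
  have key := hasDerivAt_intervalIntegral_of_continuousOn (𝕜 := ℝ) (x₀ := r) (ε := r/2)
    (α := b) (β := a)
    (f := fun s t => Φ ((t:ℂ) - (s:ℂ)*Complex.I))
    (f' := fun s t => (-Complex.I) • deriv Φ ((t:ℂ) - (s:ℂ)*Complex.I)) (half_pos hr)
    (contOn_comp hΦ.continuousOn (by fun_prop)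
      (fun p hp => bot_not_mem (pos_of_mem_cb hr hp.1).ne'))
    ((contOn_comp (hDc hΦ) (by fun_prop)
        (fun p hp => bot_not_mem (pos_of_mem_cb hr hp.1).ne')).const_smul (-Complex.I))
    (fun t _ s hs => by
      have hmem : (t:ℂ) - (s:ℂ)*Complex.I ∉ seg a b :=
        bot_not_mem (pos_of_mem_cb hr (Metric.ball_subset_closedBall hs)).ne'
      have hin : HasDerivAt (fun s : ℝ => (t:ℂ) - (s:ℂ)*Complex.I) (-(1 * Complex.I)) s :=
        ((hasDerivAt_ofReal s).mul_const Complex.I).const_sub _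
      simpa [Function.comp_def] using (hHD hΦ hmem).scomp_of_eq s hin rfl)
  have hval : (∫ t in b..a, (-Complex.I) • deriv Φ ((t:ℂ) - (r:ℂ)*Complex.I))
      = (-Complex.I) • (Φ ((a:ℂ) - (r:ℂ)*Complex.I) - Φ ((b:ℂ) - (r:ℂ)*Complex.I)) := by
    rw [intervalIntegral.integral_smul]
    congr 1
    refine intervalIntegral.integral_eq_sub_of_hasDerivAt
      (f := fun t : ℝ => Φ ((t:ℂ) - (r:ℂ)*Complex.I)) (fun t _ => ?_) ?_
    · have hin : HasDerivAt (fun t : ℝ => (t:ℂ) - (r:ℂ)*Complex.I) 1 t :=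
        (hasDerivAt_ofReal t).sub_const _
      simpa [Function.comp_def] using (hHD hΦ (bot_not_mem (a := a) (b := b) hr.ne' (t := t))).scomp_of_eq t hin rfl
    · exact (contOn_comp (hDc hΦ) (by fun_prop)
        (fun t _ => bot_not_mem hr.ne')).intervalIntegrable
  rwa [hval] at key

set_option maxHeartbeats 1000000 in
lemma hasDerivAt_circ (hΦ : DifferentiableOn ℂ Φ (seg a b)ᶜ) (x θ₁ θ₂ : ℝ)
    (hmem : ∀ ρ : ℝ, 0 < ρ → ∀ θ ∈ Set.uIcc θ₁ θ₂,
      (x:ℂ) + (ρ:ℂ) * Complex.exp ((θ:ℂ) * Complex.I) ∉ seg a b)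
    {r : ℝ} (hr : 0 < r) :
    HasDerivAt (fun s : ℝ => ∫ θ in θ₁..θ₂,
        ((s:ℂ) * Complex.I * Complex.exp ((θ:ℂ) * Complex.I)) •
          Φ ((x:ℂ) + (s:ℂ) * Complex.exp ((θ:ℂ) * Complex.I)))
      (Complex.exp ((θ₂:ℂ) * Complex.I) •
          Φ ((x:ℂ) + (r:ℂ) * Complex.exp ((θ₂:ℂ) * Complex.I))
        - Complex.exp ((θ₁:ℂ) * Complex.I) •
          Φ ((x:ℂ) + (r:ℂ) * Complex.exp ((θ₁:ℂ) * Complex.I))) r := by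
  set D := deriv Φ with hD
  have key := hasDerivAt_intervalIntegral_of_continuousOn (𝕜 := ℝ) (x₀ := r) (ε := r/2)
    (α := θ₁) (β := θ₂)
    (f := fun s θ => ((s:ℂ) * Complex.I * Complex.exp ((θ:ℂ) * Complex.I)) •
        Φ ((x:ℂ) + (s:ℂ) * Complex.exp ((θ:ℂ) * Complex.I)))
    (f' := fun s θ =>
        ((s:ℂ) * Complex.I * Complex.exp ((θ:ℂ) * Complex.I)) •
          (Complex.exp ((θ:ℂ) * Complex.I) •
            D ((x:ℂ) + (s:ℂ) * Complex.exp ((θ:ℂ) * Complex.I)))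
        + (Complex.I * Complex.exp ((θ:ℂ) * Complex.I)) •
          Φ ((x:ℂ) + (s:ℂ) * Complex.exp ((θ:ℂ) * Complex.I)))
    (half_pos hr) ?_ ?_ ?_
  · rw [show (∫ θ in θ₁..θ₂,
        ((r:ℂ) * Complex.I * Complex.exp ((θ:ℂ) * Complex.I)) •
          (Complex.exp ((θ:ℂ) * Complex.I) •
            D ((x:ℂ) + (r:ℂ) * Complex.exp ((θ:ℂ) * Complex.I)))
        + (Complex.I * Complex.exp ((θ:ℂ) * Complex.I)) •
          Φ ((x:ℂ) + (r:ℂ) * Complex.exp ((θ:ℂ) * Complex.I)))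
      = Complex.exp ((θ₂:ℂ) * Complex.I) •
          Φ ((x:ℂ) + (r:ℂ) * Complex.exp ((θ₂:ℂ) * Complex.I))
        - Complex.exp ((θ₁:ℂ) * Complex.I) •
          Φ ((x:ℂ) + (r:ℂ) * Complex.exp ((θ₁:ℂ) * Complex.I)) from ?_] at key
    · exact key
    · refine intervalIntegral.integral_eq_sub_of_hasDerivAt
        (f := fun θ : ℝ => Complex.exp ((θ:ℂ) * Complex.I) •
          Φ ((x:ℂ) + (r:ℂ) * Complex.exp ((θ:ℂ) * Complex.I))) (fun θ hθ => ?_) ?_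
      · have hc : HasDerivAt (fun θ : ℝ => Complex.exp ((θ:ℂ) * Complex.I))
            (Complex.exp ((θ:ℂ) * Complex.I) * (1 * Complex.I)) θ :=
          ((hasDerivAt_ofReal θ).mul_const Complex.I).cexp
        have hin : HasDerivAt (fun θ : ℝ => (x:ℂ) + (r:ℂ) * Complex.exp ((θ:ℂ) * Complex.I))
            ((r:ℂ) * (Complex.exp ((θ:ℂ) * Complex.I) * (1 * Complex.I))) θ :=
          (((hasDerivAt_ofReal θ).mul_const Complex.I).cexp.const_mul (r:ℂ)).const_add _
        have hΦθ : HasDerivAt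
            (fun θ : ℝ => Φ ((x:ℂ) + (r:ℂ) * Complex.exp ((θ:ℂ) * Complex.I)))
            (((r:ℂ) * (Complex.exp ((θ:ℂ) * Complex.I) * (1 * Complex.I))) •
              D ((x:ℂ) + (r:ℂ) * Complex.exp ((θ:ℂ) * Complex.I))) θ :=
          (hHD hΦ (hmem r hr θ hθ)).scomp_of_eq θ hin rfl
        have := hc.smul hΦθ
        convert this using 1
        · rfl
        module
      · apply ContinuousOn.intervalIntegrable
        apply ContinuousOn.add
        · exact ContinuousOn.smul (by fun_prop)
            (ContinuousOn.smul (by fun_prop)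
              (contOn_comp (hDc hΦ) (by fun_prop) (fun θ hθ => hmem r hr θ hθ)))
        · exact ContinuousOn.smul (by fun_prop)
            (contOn_comp hΦ.continuousOn (by fun_prop) (fun θ hθ => hmem r hr θ hθ))
  · refine ContinuousOn.smul (by fun_prop) ?_
    exact contOn_comp hΦ.continuousOn (by fun_prop)
      (fun p hp => hmem p.1 (pos_of_mem_cb hr hp.1) p.2 hp.2)
  · refine ContinuousOn.add (ContinuousOn.smul (by fun_prop) ?_)
      (ContinuousOn.smul (by fun_prop) ?_)
    · exact ContinuousOn.smul (by fun_prop)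
        (contOn_comp (hDc hΦ) (by fun_prop)
          (fun p hp => hmem p.1 (pos_of_mem_cb hr hp.1) p.2 hp.2))
    · exact contOn_comp hΦ.continuousOn (by fun_prop)
        (fun p hp => hmem p.1 (pos_of_mem_cb hr hp.1) p.2 hp.2)
  · intro θ hθ s hs
    have hspos : 0 < s := pos_of_mem_cb hr (Metric.ball_subset_closedBall hs)
    have hc : HasDerivAt (fun s : ℝ => (s:ℂ) * Complex.I * Complex.exp ((θ:ℂ) * Complex.I))
        (Complex.I * Complex.exp ((θ:ℂ) * Complex.I)) s := by
      simpa [mul_assoc] using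
        (hasDerivAt_ofReal s).mul_const (Complex.I * Complex.exp ((θ:ℂ) * Complex.I))
    have hin : HasDerivAt (fun s : ℝ => (x:ℂ) + (s:ℂ) * Complex.exp ((θ:ℂ) * Complex.I))
        (1 * Complex.exp ((θ:ℂ) * Complex.I)) s :=
      ((hasDerivAt_ofReal s).mul_const _).const_add _
    have hΦs : HasDerivAt
        (fun s : ℝ => Φ ((x:ℂ) + (s:ℂ) * Complex.exp ((θ:ℂ) * Complex.I)))
        ((1 * Complex.exp ((θ:ℂ) * Complex.I)) •
          D ((x:ℂ) + (s:ℂ) * Complex.exp ((θ:ℂ) * Complex.I))) s :=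
      (hHD hΦ (hmem s hspos θ hθ)).scomp_of_eq s hin rfl
    have := hc.smul hΦs
    convert this using 1
    · rfl
    module

end

lemma hasDerivWithinAt_stadium (hΦ : DifferentiableOn ℂ Φ (seg a b)ᶜ)
    {s : ℝ} (hs : s ∈ Set.Ioi (0:ℝ)) :
    HasDerivWithinAt (fun s : ℝ => stadiumIntegral a b s Φ) 0 (Set.Ioi (0:ℝ)) s := by
  have hs' : (0:ℝ) < s := hs
  have h1 := hasDerivAt_top hΦ hs'
  have h2 := hasDerivAt_circ hΦ b (π/2) (-(π/2))
    (fun ρ hρ θ hθ => circ_right_not_mem hρ hθ) hs'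
  have h3 := hasDerivAt_bot hΦ hs'
  have h4 := hasDerivAt_circ hΦ a (3*π/2) (π/2)
    (fun ρ hρ θ hθ => circ_left_not_mem hρ hθ) hs'
  have h := ((h1.add h2).add h3).add h4
  rw [exp_pi_div_two, exp_neg_pi_div_two, exp_three_pi_div_two] at h
  have e1 : (b:ℂ) + (s:ℂ) * -Complex.I = (b:ℂ) - (s:ℂ) * Complex.I := by ring
  have e2 : (a:ℂ) + (s:ℂ) * -Complex.I = (a:ℂ) - (s:ℂ) * Complex.I := by ring
  rw [e1, e2] at h
  have hz : Complex.I • (Φ ((b:ℂ) + (s:ℂ)*Complex.I) - Φ ((a:ℂ) + (s:ℂ)*Complex.I)) +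
        ((-Complex.I) • Φ ((b:ℂ) - (s:ℂ)*Complex.I) -
          Complex.I • Φ ((b:ℂ) + (s:ℂ)*Complex.I)) +
        (-Complex.I) • (Φ ((a:ℂ) - (s:ℂ)*Complex.I) - Φ ((b:ℂ) - (s:ℂ)*Complex.I)) +
        (Complex.I • Φ ((a:ℂ) + (s:ℂ)*Complex.I) -
          (-Complex.I) • Φ ((a:ℂ) - (s:ℂ)*Complex.I)) = 0 := by
    module
  rw [hz] at h
  exact h.hasDerivWithinAt

lemma stadium_const (hΦ : DifferentiableOn ℂ Φ (seg a b)ᶜ)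
    {r r' : ℝ} (hr : 0 < r) (hr' : 0 < r') :
    stadiumIntegral a b r Φ = stadiumIntegral a b r' Φ := by
  have := Convex.norm_image_sub_le_of_norm_hasDerivWithin_le
    (f := fun s : ℝ => stadiumIntegral a b s Φ) (f' := fun _ => (0:E)) (C := 0)
    (fun x hx => hasDerivWithinAt_stadium hΦ hx)
    (fun x _ => by simp) (convex_Ioi 0) hr' hr
  rw [zero_mul] at this
  rw [← sub_eq_zero]
  exact norm_le_zero_iff.1 this

variable {F : ℂ → E}

lemma diff_param (hF : DifferentiableOn ℂ F (seg a b)ᶜ) (w z : ℝ → ℂ)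
    (hw : Continuous w) (hz : Continuous z) {α β : ℝ}
    (hmem : ∀ t ∈ Set.uIcc α β, z t ∉ seg a b) :
    Differentiable ℂ (fun ζ : ℂ =>
      ∫ t in α..β, w t • (Complex.exp (-(Complex.I * z t * ζ)) • F (z t))) := by
  intro ζ₀
  refine (hasDerivAt_intervalIntegral_of_continuousOn (𝕜 := ℂ) (x₀ := ζ₀) (ε := 1)
    (α := α) (β := β)
    (f := fun ζ t => w t • (Complex.exp (-(Complex.I * z t * ζ)) • F (z t)))
    (f' := fun ζ t => w t •
      ((Complex.exp (-(Complex.I * z t * ζ)) * -(Complex.I * z t * 1)) • F (z t)))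
    one_pos ?_ ?_ ?_).differentiableAt
  · refine ContinuousOn.smul (by fun_prop) (ContinuousOn.smul (by fun_prop) ?_)
    exact contOn_comp hF.continuousOn (by fun_prop) (fun p hp => hmem p.2 hp.2)
  · refine ContinuousOn.smul (by fun_prop) (ContinuousOn.smul (by fun_prop) ?_)
    exact contOn_comp hF.continuousOn (by fun_prop) (fun p hp => hmem p.2 hp.2)
  · intro t ht ζ hζ
    have hexp : HasDerivAt (fun ζ : ℂ => Complex.exp (-(Complex.I * z t * ζ)))
        (Complex.exp (-(Complex.I * z t * ζ)) * -(Complex.I * z t * 1)) ζ := by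
      exact (((hasDerivAt_id ζ).const_mul (Complex.I * z t)).neg).cexp
    exact (hexp.smul_const (F (z t))).const_smul (w t)

lemma diff_fourier (hF : DifferentiableOn ℂ F (seg a b)ᶜ) {r : ℝ} (hr : 0 < r) :
    Differentiable ℂ (fourierCpt a b r F) := by
  have h1 : Differentiable ℂ (fun ζ : ℂ => ∫ t in a..b,
      Complex.exp (-(Complex.I * ((t:ℂ) + (r:ℂ)*Complex.I) * ζ)) •
        F ((t:ℂ) + (r:ℂ)*Complex.I)) := by
    simpa only [one_smul] using diff_param hF (fun _ => (1:ℂ))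
      (fun t => (t:ℂ) + (r:ℂ)*Complex.I) continuous_const (by fun_prop)
      (fun t _ => top_not_mem hr.ne')
  have h2 : Differentiable ℂ (fun ζ : ℂ => ∫ θ in (π/2)..(-(π/2)),
      ((r:ℂ) * Complex.I * Complex.exp ((θ:ℂ) * Complex.I)) •
        (Complex.exp (-(Complex.I * ((b:ℂ) + (r:ℂ) * Complex.exp ((θ:ℂ) * Complex.I)) * ζ)) •
          F ((b:ℂ) + (r:ℂ) * Complex.exp ((θ:ℂ) * Complex.I)))) :=
    diff_param hF (fun θ => (r:ℂ) * Complex.I * Complex.exp ((θ:ℂ) * Complex.I))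
      (fun θ => (b:ℂ) + (r:ℂ) * Complex.exp ((θ:ℂ) * Complex.I)) (by fun_prop) (by fun_prop)
      (fun θ hθ => circ_right_not_mem hr hθ)
  have h3 : Differentiable ℂ (fun ζ : ℂ => ∫ t in b..a,
      Complex.exp (-(Complex.I * ((t:ℂ) - (r:ℂ)*Complex.I) * ζ)) •
        F ((t:ℂ) - (r:ℂ)*Complex.I)) := by
    simpa only [one_smul] using diff_param hF (fun _ => (1:ℂ))
      (fun t => (t:ℂ) - (r:ℂ)*Complex.I) continuous_const (by fun_prop)
      (fun t _ => bot_not_mem hr.ne')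
  have h4 : Differentiable ℂ (fun ζ : ℂ => ∫ θ in (3*π/2)..(π/2),
      ((r:ℂ) * Complex.I * Complex.exp ((θ:ℂ) * Complex.I)) •
        (Complex.exp (-(Complex.I * ((a:ℂ) + (r:ℂ) * Complex.exp ((θ:ℂ) * Complex.I)) * ζ)) •
          F ((a:ℂ) + (r:ℂ) * Complex.exp ((θ:ℂ) * Complex.I)))) :=
    diff_param hF (fun θ => (r:ℂ) * Complex.I * Complex.exp ((θ:ℂ) * Complex.I))
      (fun θ => (a:ℂ) + (r:ℂ) * Complex.exp ((θ:ℂ) * Complex.I)) (by fun_prop) (by fun_prop)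
      (fun θ hθ => circ_left_not_mem hr hθ)
  exact (((h1.add h2).add h3).add h4)

lemma re_neg_I_mul (z ζ : ℂ) : (-(Complex.I * z * ζ)).re = z.im * ζ.re + z.re * ζ.im := by
  simp [Complex.mul_re, Complex.mul_im]
  ring

lemma exp_term_bound {a b : ℝ} (hab : a ≤ b) {c : ℝ} (hc : 0 < c) {z ζ : ℂ}
    (hre : z.re ∈ Set.Icc (a - c) (b + c)) (him : |z.im| ≤ c) :
    ‖Complex.exp (-(Complex.I * z * ζ))‖ ≤
      Real.exp (2*c*‖ζ‖ + max (a*ζ.im) (b*ζ.im)) := by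
  rw [Complex.norm_exp]
  apply Real.exp_le_exp.2
  rw [re_neg_I_mul]
  have him' : |ζ.im| ≤ ‖ζ‖ := Complex.abs_im_le_norm ζ
  have hre' : |ζ.re| ≤ ‖ζ‖ := Complex.abs_re_le_norm ζ
  have h1 : z.im * ζ.re ≤ c * ‖ζ‖ :=
    calc z.im * ζ.re ≤ |z.im * ζ.re| := le_abs_self _
    _ = |z.im| * |ζ.re| := abs_mul _ _
    _ ≤ c * ‖ζ‖ := mul_le_mul him hre' (abs_nonneg _) hc.le
  have h2 : z.re * ζ.im ≤ max (a*ζ.im) (b*ζ.im) + c * ‖ζ‖ := by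
    rcases le_or_gt 0 ζ.im with h | h
    · have h5 : z.re * ζ.im ≤ (b + c) * ζ.im := mul_le_mul_of_nonneg_right hre.2 h
      have h3 : c * ζ.im ≤ c * ‖ζ‖ :=
        mul_le_mul_of_nonneg_left ((le_abs_self _).trans him') hc.le
      have h4 : b * ζ.im ≤ max (a*ζ.im) (b*ζ.im) := le_max_right _ _
      nlinarith
    · have h5 : z.re * ζ.im ≤ (a - c) * ζ.im := by nlinarith [hre.1]
      have h3 : c * (-ζ.im) ≤ c * ‖ζ‖ :=
        mul_le_mul_of_nonneg_left ((neg_le_abs _).trans him') hc.le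
      have h4 : a * ζ.im ≤ max (a*ζ.im) (b*ζ.im) := le_max_left _ _
      nlinarith
  linarith

set_option maxHeartbeats 1000000 in
lemma fourier_bound (hab : a ≤ b) (hF : DifferentiableOn ℂ F (seg a b)ᶜ)
    {c : ℝ} (hc : 0 < c) :
    ∃ C : ℝ, 0 < C ∧ ∀ ζ : ℂ, ‖fourierCpt a b c F ζ‖ ≤
      C * Real.exp (2*c*‖ζ‖ + max (a*ζ.im) (b*ζ.im)) := by
  obtain ⟨M₁, hM₁⟩ := isCompact_uIcc.exists_bound_of_continuousOn
    (contOn_comp (g := fun t : ℝ => (t:ℂ) + (c:ℂ)*Complex.I) (s := Set.uIcc a b)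
      hF.continuousOn (by fun_prop) (fun t _ => top_not_mem hc.ne'))
  obtain ⟨M₂, hM₂⟩ := isCompact_uIcc.exists_bound_of_continuousOn
    (contOn_comp (g := fun θ : ℝ => (b:ℂ) + (c:ℂ)*Complex.exp ((θ:ℂ)*Complex.I))
      (s := Set.uIcc (π/2) (-(π/2)))
      hF.continuousOn (by fun_prop) (fun θ hθ => circ_right_not_mem hc hθ))
  obtain ⟨M₃, hM₃⟩ := isCompact_uIcc.exists_bound_of_continuousOn
    (contOn_comp (g := fun t : ℝ => (t:ℂ) - (c:ℂ)*Complex.I) (s := Set.uIcc b a)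
      hF.continuousOn (by fun_prop) (fun t _ => bot_not_mem hc.ne'))
  obtain ⟨M₄, hM₄⟩ := isCompact_uIcc.exists_bound_of_continuousOn
    (contOn_comp (g := fun θ : ℝ => (a:ℂ) + (c:ℂ)*Complex.exp ((θ:ℂ)*Complex.I))
      (s := Set.uIcc (3*π/2) (π/2))
      hF.continuousOn (by fun_prop) (fun θ hθ => circ_left_not_mem hc hθ))
  set N₁ := max M₁ 0 with hN₁
  set N₂ := max M₂ 0 with hN₂
  set N₃ := max M₃ 0 with hN₃
  set N₄ := max M₄ 0 with hN₄
  have hN₁0 : 0 ≤ N₁ := le_max_right _ _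
  have hN₂0 : 0 ≤ N₂ := le_max_right _ _
  have hN₃0 : 0 ≤ N₃ := le_max_right _ _
  have hN₄0 : 0 ≤ N₄ := le_max_right _ _
  refine ⟨(b-a)*(N₁ + N₃) + π*c*(N₂ + N₄) + 1, ?_, ?_⟩
  · have t1 : 0 ≤ (b-a)*(N₁ + N₃) := mul_nonneg (by linarith) (by linarith)
    have t2 : 0 ≤ π*c*(N₂ + N₄) :=
      mul_nonneg (mul_nonneg Real.pi_pos.le hc.le) (by linarith)
    linarith
  · intro ζ
    set Eexp := Real.exp (2*c*‖ζ‖ + max (a*ζ.im) (b*ζ.im)) with hE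
    have hEpos : 0 < Eexp := Real.exp_pos _
    have habs1 : |b - a| = b - a := abs_of_nonneg (by linarith)
    have habs2 : |a - b| = b - a := by rw [abs_sub_comm, habs1]
    have hπ1 : |(-(π/2)) - (π/2)| = π := by
      have : (-(π/2)) - (π/2) = -π := by ring
      rw [this, abs_neg, abs_of_pos Real.pi_pos]
    have hπ2 : |(π/2) - 3*π/2| = π := by
      have : (π/2) - 3*π/2 = -π := by ring
      rw [this, abs_neg, abs_of_pos Real.pi_pos]
    have hP1 : ‖∫ t in a..b,
        Complex.exp (-(Complex.I * ((t:ℂ)+(c:ℂ)*Complex.I) * ζ)) •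
          F ((t:ℂ)+(c:ℂ)*Complex.I)‖ ≤ (Eexp * N₁) * |b - a| := by
      apply intervalIntegral.norm_integral_le_of_norm_le_const
      intro t ht
      have ht' : t ∈ Set.uIcc a b := Set.uIoc_subset_uIcc ht
      have htI : t ∈ Set.Icc a b := by rwa [Set.uIcc_of_le hab] at ht'
      rw [norm_smul]
      have hexp : ‖Complex.exp (-(Complex.I * ((t:ℂ)+(c:ℂ)*Complex.I) * ζ))‖ ≤ Eexp := by
        apply exp_term_bound hab hc
        · constructor <;> simp <;> [linarith [htI.1]; linarith [htI.2]]
        · simp [abs_of_pos hc]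
      exact mul_le_mul hexp
        (le_of_le_of_eq ((hM₁ t ht').trans (le_max_left M₁ 0)) hN₁.symm)
        (norm_nonneg _) hEpos.le
    have hP3 : ‖∫ t in b..a,
        Complex.exp (-(Complex.I * ((t:ℂ)-(c:ℂ)*Complex.I) * ζ)) •
          F ((t:ℂ)-(c:ℂ)*Complex.I)‖ ≤ (Eexp * N₃) * |a - b| := by
      apply intervalIntegral.norm_integral_le_of_norm_le_const
      intro t ht
      have ht' : t ∈ Set.uIcc b a := Set.uIoc_subset_uIcc ht
      have htI : t ∈ Set.Icc a b := by rwa [Set.uIcc_comm, Set.uIcc_of_le hab] at ht'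
      rw [norm_smul]
      have hexp : ‖Complex.exp (-(Complex.I * ((t:ℂ)-(c:ℂ)*Complex.I) * ζ))‖ ≤ Eexp := by
        apply exp_term_bound hab hc
        · constructor <;> simp <;> [linarith [htI.1]; linarith [htI.2]]
        · simp [abs_of_pos hc]
      exact mul_le_mul hexp
        (le_of_le_of_eq ((hM₃ t ht').trans (le_max_left M₃ 0)) hN₃.symm)
        (norm_nonneg _) hEpos.le
    have hP2 : ‖∫ θ in (π/2)..(-(π/2)),
        ((c:ℂ)*Complex.I*Complex.exp ((θ:ℂ)*Complex.I)) •
          (Complex.exp (-(Complex.I * ((b:ℂ)+(c:ℂ)*Complex.exp ((θ:ℂ)*Complex.I)) * ζ)) •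
            F ((b:ℂ)+(c:ℂ)*Complex.exp ((θ:ℂ)*Complex.I)))‖
        ≤ (c * (Eexp * N₂)) * |(-(π/2)) - (π/2)| := by
      apply intervalIntegral.norm_integral_le_of_norm_le_const
      intro θ hθ
      have hθ' : θ ∈ Set.uIcc (π/2) (-(π/2)) := Set.uIoc_subset_uIcc hθ
      rw [norm_smul, norm_smul]
      have hw : ‖(c:ℂ)*Complex.I*Complex.exp ((θ:ℂ)*Complex.I)‖ = c := by
        simp [Complex.norm_exp_ofReal_mul_I, abs_of_pos hc]
      rw [hw]
      have hexp : ‖Complex.exp (-(Complex.I *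
          ((b:ℂ)+(c:ℂ)*Complex.exp ((θ:ℂ)*Complex.I)) * ζ))‖ ≤ Eexp := by
        apply exp_term_bound hab hc
        · constructor <;>
            simp [Complex.exp_ofReal_mul_I_re, Complex.exp_ofReal_mul_I_im] <;>
            nlinarith [Real.neg_one_le_cos θ, Real.cos_le_one θ, hc.le]
        · rw [show ((b:ℂ)+(c:ℂ)*Complex.exp ((θ:ℂ)*Complex.I)).im = c * Real.sin θ by
            simp [Complex.exp_ofReal_mul_I_re, Complex.exp_ofReal_mul_I_im], abs_mul,
            abs_of_pos hc]
          nlinarith [Real.abs_sin_le_one θ, hc.le, abs_nonneg (Real.sin θ)]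
      have hFb : ‖F ((b:ℂ)+(c:ℂ)*Complex.exp ((θ:ℂ)*Complex.I))‖ ≤ N₂ :=
        le_of_le_of_eq ((hM₂ θ hθ').trans (le_max_left M₂ 0)) hN₂.symm
      have hmain : ‖Complex.exp (-(Complex.I *
            ((b:ℂ)+(c:ℂ)*Complex.exp ((θ:ℂ)*Complex.I)) * ζ))‖ *
          ‖F ((b:ℂ)+(c:ℂ)*Complex.exp ((θ:ℂ)*Complex.I))‖ ≤ Eexp * N₂ :=
        mul_le_mul hexp hFb (norm_nonneg _) hEpos.le
      exact mul_le_mul_of_nonneg_left hmain hc.le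
    have hP4 : ‖∫ θ in (3*π/2)..(π/2),
        ((c:ℂ)*Complex.I*Complex.exp ((θ:ℂ)*Complex.I)) •
          (Complex.exp (-(Complex.I * ((a:ℂ)+(c:ℂ)*Complex.exp ((θ:ℂ)*Complex.I)) * ζ)) •
            F ((a:ℂ)+(c:ℂ)*Complex.exp ((θ:ℂ)*Complex.I)))‖
        ≤ (c * (Eexp * N₄)) * |(π/2) - 3*π/2| := by
      apply intervalIntegral.norm_integral_le_of_norm_le_const
      intro θ hθ
      have hθ' : θ ∈ Set.uIcc (3*π/2) (π/2) := Set.uIoc_subset_uIcc hθ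
      rw [norm_smul, norm_smul]
      have hw : ‖(c:ℂ)*Complex.I*Complex.exp ((θ:ℂ)*Complex.I)‖ = c := by
        simp [Complex.norm_exp_ofReal_mul_I, abs_of_pos hc]
      rw [hw]
      have hexp : ‖Complex.exp (-(Complex.I *
          ((a:ℂ)+(c:ℂ)*Complex.exp ((θ:ℂ)*Complex.I)) * ζ))‖ ≤ Eexp := by
        apply exp_term_bound hab hc
        · constructor <;>
            simp [Complex.exp_ofReal_mul_I_re, Complex.exp_ofReal_mul_I_im] <;>
            nlinarith [Real.neg_one_le_cos θ, Real.cos_le_one θ, hc.le]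
        · rw [show ((a:ℂ)+(c:ℂ)*Complex.exp ((θ:ℂ)*Complex.I)).im = c * Real.sin θ by
            simp [Complex.exp_ofReal_mul_I_re, Complex.exp_ofReal_mul_I_im], abs_mul,
            abs_of_pos hc]
          nlinarith [Real.abs_sin_le_one θ, hc.le, abs_nonneg (Real.sin θ)]
      have hFb : ‖F ((a:ℂ)+(c:ℂ)*Complex.exp ((θ:ℂ)*Complex.I))‖ ≤ N₄ :=
        le_of_le_of_eq ((hM₄ θ hθ').trans (le_max_left M₄ 0)) hN₄.symm
      have hmain : ‖Complex.exp (-(Complex.I *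
            ((a:ℂ)+(c:ℂ)*Complex.exp ((θ:ℂ)*Complex.I)) * ζ))‖ *
          ‖F ((a:ℂ)+(c:ℂ)*Complex.exp ((θ:ℂ)*Complex.I))‖ ≤ Eexp * N₄ :=
        mul_le_mul hexp hFb (norm_nonneg _) hEpos.le
      exact mul_le_mul_of_nonneg_left hmain hc.le
    have e : fourierCpt a b c F ζ =
        (∫ t in a..b, Complex.exp (-(Complex.I * ((t:ℂ)+(c:ℂ)*Complex.I) * ζ)) •
          F ((t:ℂ)+(c:ℂ)*Complex.I)) +
        (∫ θ in (π/2)..(-(π/2)),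
          ((c:ℂ)*Complex.I*Complex.exp ((θ:ℂ)*Complex.I)) •
            (Complex.exp (-(Complex.I * ((b:ℂ)+(c:ℂ)*Complex.exp ((θ:ℂ)*Complex.I)) * ζ)) •
              F ((b:ℂ)+(c:ℂ)*Complex.exp ((θ:ℂ)*Complex.I)))) +
        (∫ t in b..a, Complex.exp (-(Complex.I * ((t:ℂ)-(c:ℂ)*Complex.I) * ζ)) •
          F ((t:ℂ)-(c:ℂ)*Complex.I)) +
        (∫ θ in (3*π/2)..(π/2),
          ((c:ℂ)*Complex.I*Complex.exp ((θ:ℂ)*Complex.I)) •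
            (Complex.exp (-(Complex.I * ((a:ℂ)+(c:ℂ)*Complex.exp ((θ:ℂ)*Complex.I)) * ζ)) •
              F ((a:ℂ)+(c:ℂ)*Complex.exp ((θ:ℂ)*Complex.I)))) := by
      unfold fourierCpt stadiumIntegral
      rfl
    rw [e]
    rw [habs1] at hP1
    rw [habs2] at hP3
    rw [hπ1] at hP2
    rw [hπ2] at hP4
    refine le_trans (le_trans (norm_add_le _ _)
      (add_le_add_left (le_trans (norm_add_le _ _)
        (add_le_add_left (norm_add_le _ _) _)) _)) ?_
    nlinarith [hP1, hP2, hP3, hP4, hEpos, Real.pi_pos]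

end Stmt13Aux

/-- The Fourier transform of a hyperfunction with real compact support `[a,b]`: the contour
integral is independent of the radius `r > 0`, defines an entire function of `ζ`, and satisfies
`‖ℱF(ζ)‖ ≤ C e^{|ζ|/k + H_{[a,b]}(Im ζ)}` for every `k ≥ 1`. -/
theorem stmt13 {E : Type*} [NormedAddCommGroup E] [NormedSpace ℂ E] [CompleteSpace E]
    (a b : ℝ) (hab : a ≤ b) (F : ℂ → E) (hF : SlowlyIncreasing a b F) :
    (∀ r r' : ℝ, 0 < r → 0 < r' → ∀ ζ : ℂ, fourierCpt a b r F ζ = fourierCpt a b r' F ζ) ∧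
    (∀ r : ℝ, 0 < r → Differentiable ℂ (fourierCpt a b r F)) ∧
    (∀ r : ℝ, 0 < r → ∀ k : ℕ, 1 ≤ k → ∃ C : ℝ, 0 < C ∧ ∀ ζ : ℂ,
      ‖fourierCpt a b r F ζ‖ ≤
        C * Real.exp (‖ζ‖ / k + max (a * ζ.im) (b * ζ.im))) := by
  obtain ⟨hFd, -⟩ := hF
  have main1 : ∀ r r' : ℝ, 0 < r → 0 < r' → ∀ ζ : ℂ,
      fourierCpt a b r F ζ = fourierCpt a b r' F ζ := by
    intro r r' hr hr' ζ
    have hΦ : DifferentiableOn ℂ (fun z => Complex.exp (-(Complex.I * z * ζ)) • F z)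
        (seg a b)ᶜ := by
      refine DifferentiableOn.smul ?_ hFd
      exact (((differentiable_id.const_mul Complex.I).mul_const ζ).neg.cexp).differentiableOn
    exact Stmt13Aux.stadium_const hΦ hr hr'
  refine ⟨main1, fun r hr => Stmt13Aux.diff_fourier hFd hr, ?_⟩
  intro r hr k hk
  have hk0 : (0:ℝ) < (k:ℝ) := by exact_mod_cast Nat.lt_of_lt_of_le Nat.zero_lt_one hk
  set c := 1 / (2 * (k:ℝ)) with hcdef
  have hc : 0 < c := by positivity
  obtain ⟨C, hC, hbound⟩ := Stmt13Aux.fourier_bound hab hFd hc (F := F)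
  refine ⟨C, hC, fun ζ => ?_⟩
  rw [main1 r c hr hc ζ]
  have h2c : 2*c*‖ζ‖ = ‖ζ‖ / k := by
    rw [hcdef]; field_simp
  calc ‖fourierCpt a b c F ζ‖
      ≤ C * Real.exp (2*c*‖ζ‖ + max (a*ζ.im) (b*ζ.im)) := hbound ζ
    _ = C * Real.exp (‖ζ‖ / k + max (a * ζ.im) (b * ζ.im)) := by rw [h2c]

end
end

section
/- Let E be a complex Banach space, a ≤ b real numbers, F : ℂ → E holomorphic on ℂ ∖ [a,b] and slowly increasing, and (c_k)_{k≥0} a sequence of complex numbers of exponential type 0 with associated entire function P(z) := Σ_{k≥0} (c_k/k!)·z^k. For c > 0 let G(ζ) := ∫_{γ_{a,b,c}} F(z)·e^{−izζ} dz, an entire E-valued function. Then the product P·F is holomorphic on ℂ ∖ [a,b] and slowly increasing, and for every ζ ∈ ℂ the series Σ_{k≥0} (c_k/k!)·i^k·G^{(k)}(ζ) converges absolutely in E with ∫_{γ_{a,b,c}} P(z)·F(z)·e^{−izζ} dz = Σ_{k≥0} (c_k/k!)·i^k·G^{(k)}(ζ), where G^{(k)} denotes the k-th complex derivative of G. -/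
noncomputable section

open Real

section Aux

open Complex MeasureTheory intervalIntegral Set Filter

namespace Stmt17Aux

lemma norm_coeff_le {c : ℕ → ℂ} {C ε : ℝ} {k : ℕ}
    (hC : ‖c k‖ ≤ C * ε ^ k) (hε : 0 ≤ ε) (z : ℂ) :
    ‖c k / (Nat.factorial k : ℂ) * z ^ k‖ ≤ C * ((ε * ‖z‖) ^ k / Nat.factorial k) := by
  rw [norm_mul, norm_div, norm_pow, Complex.norm_natCast]
  have h1 : ‖c k‖ ≤ C * ε ^ k := by exact hC
  calc ‖c k‖ / (Nat.factorial k : ℝ) * ‖z‖ ^ k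
      ≤ (C * ε ^ k) / (Nat.factorial k : ℝ) * ‖z‖ ^ k := by
        gcongr
    _ = C * ((ε * ‖z‖) ^ k / Nat.factorial k) := by
        rw [mul_pow]; ring

lemma summable_normP {c : ℕ → ℂ} (hc : ExpTypeZero c) (z : ℂ) :
    Summable fun k : ℕ => ‖c k / (Nat.factorial k : ℂ) * z ^ k‖ := by
  obtain ⟨C, hC0, hC⟩ := hc 1 one_pos
  refine Summable.of_nonneg_of_le (fun k => norm_nonneg _)
    (fun k => norm_coeff_le (hC k) zero_le_one z)
    (((Real.summable_pow_div_factorial (1 * ‖z‖)).mul_left C))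

lemma summableP {c : ℕ → ℂ} (hc : ExpTypeZero c) (z : ℂ) :
    Summable fun k : ℕ => c k / (Nat.factorial k : ℂ) * z ^ k :=
  (summable_normP hc z).of_norm

lemma P_le {c : ℕ → ℂ} (hc : ExpTypeZero c) {ε : ℝ} (hε : 0 < ε) :
    ∃ C : ℝ, 0 < C ∧ ∀ z : ℂ,
      ‖∑' k : ℕ, c k / (Nat.factorial k : ℂ) * z ^ k‖ ≤ C * Real.exp (ε * ‖z‖) := by
  obtain ⟨C, hC0, hC⟩ := hc ε hε
  refine ⟨C, hC0, fun z => ?_⟩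
  have h1 : ‖∑' k : ℕ, c k / (Nat.factorial k : ℂ) * z ^ k‖
      ≤ ∑' k : ℕ, ‖c k / (Nat.factorial k : ℂ) * z ^ k‖ :=
    norm_tsum_le_tsum_norm (summable_normP hc z)
  have h2 : ∑' k : ℕ, ‖c k / (Nat.factorial k : ℂ) * z ^ k‖
      ≤ ∑' k : ℕ, C * ((ε * ‖z‖) ^ k / Nat.factorial k) := by
    refine Summable.tsum_le_tsum (fun k => norm_coeff_le (hC k) hε.le z)
      (summable_normP hc z) (((Real.summable_pow_div_factorial (ε * ‖z‖)).mul_left C))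
  have h3 : ∑' k : ℕ, C * ((ε * ‖z‖) ^ k / Nat.factorial k) = C * Real.exp (ε * ‖z‖) := by
    rw [tsum_mul_left, Real.exp_eq_exp_ℝ, NormedSpace.exp_eq_tsum_div]
  linarith [h1, h2, h3.le]

lemma P_diff {c : ℕ → ℂ} (hc : ExpTypeZero c) :
    Differentiable ℂ (fun z : ℂ => ∑' k : ℕ, c k / (Nat.factorial k : ℂ) * z ^ k) := by
  obtain ⟨C, hC0, hC⟩ := hc 1 one_pos
  set q := FormalMultilinearSeries.ofScalars ℂ (fun k => c k / (Nat.factorial k : ℂ)) with hq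
  have hrad : q.radius = ⊤ := by
    apply FormalMultilinearSeries.radius_eq_top_of_summable_norm
    intro ρ
    refine Summable.of_nonneg_of_le (fun n => by positivity) (fun n => ?_)
      ((Real.summable_pow_div_factorial ((1:ℝ) * (ρ:ℝ))).mul_left C)
    have hn : ‖q n‖ = ‖c n / (Nat.factorial n : ℂ)‖ :=
      FormalMultilinearSeries.ofScalars_norm ℂ (fun k => c k / (Nat.factorial k : ℂ)) n
    rw [hn]
    calc ‖c n / (Nat.factorial n : ℂ)‖ * (ρ:ℝ) ^ n
        = ‖c n / (Nat.factorial n : ℂ) * ((ρ:ℝ):ℂ) ^ n‖ := by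
          rw [norm_mul, norm_pow, Complex.norm_real, Real.norm_eq_abs,
            _root_.abs_of_nonneg ρ.coe_nonneg]
      _ ≤ C * (((1:ℝ) * ‖(((ρ:ℝ)):ℂ)‖) ^ n / Nat.factorial n) :=
          norm_coeff_le (hC n) zero_le_one _
      _ = C * (((1:ℝ) * (ρ:ℝ)) ^ n / Nat.factorial n) := by
          rw [Complex.norm_real, Real.norm_eq_abs, _root_.abs_of_nonneg ρ.coe_nonneg]
  have hball : HasFPowerSeriesOnBall q.sum q 0 q.radius :=
    q.hasFPowerSeriesOnBall (by rw [hrad]; exact ENNReal.zero_lt_top)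
  have hdiff : Differentiable ℂ q.sum := by
    intro z
    have hz : z ∈ EMetric.ball (0 : ℂ) q.radius := by
      rw [hrad]; exact edist_lt_top z 0
    exact (hball.differentiableOn z hz).differentiableAt
      (EMetric.isOpen_ball.mem_nhds hz)
  have hsum : q.sum = fun z : ℂ => ∑' k : ℕ, c k / (Nat.factorial k : ℂ) * z ^ k := by
    funext z
    rw [FormalMultilinearSeries.sum]
    exact tsum_congr fun n => by
      rw [hq, FormalMultilinearSeries.ofScalars_apply_eq, smul_eq_mul]
  rwa [hsum] at hdiff

end Stmt17Aux
end Aux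
section Piece

open Complex MeasureTheory intervalIntegral Set Filter Metric

namespace Stmt17Aux

variable {E : Type*} [NormedAddCommGroup E] [NormedSpace ℂ E]

/-- The integrand of the `k`-th derivative piece. -/
def pf (γ w : ℝ → ℂ) (g : ℝ → E) (k : ℕ) (ζ : ℂ) (t : ℝ) : E :=
  (w t * (-Complex.I * γ t) ^ k * Complex.exp (-(Complex.I * γ t * ζ))) • g t

/-- The `k`-th derivative piece integral. -/
def pI (γ w : ℝ → ℂ) (g : ℝ → E) (u v : ℝ) (k : ℕ) (ζ : ℂ) : E :=
  ∫ t in u..v, pf γ w g k ζ t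

variable {γ w : ℝ → ℂ} {g : ℝ → E} {u v : ℝ}

lemma pf_contOn (hγ : Continuous γ) (hw : Continuous w)
    (hg : ContinuousOn g (uIcc u v)) (k : ℕ) (ζ : ℂ) :
    ContinuousOn (pf γ w g k ζ) (uIcc u v) := by
  apply ContinuousOn.smul _ hg
  apply Continuous.continuousOn
  fun_prop

lemma pf_intervalIntegrable (hγ : Continuous γ) (hw : Continuous w)
    (hg : ContinuousOn g (uIcc u v)) (k : ℕ) (ζ : ℂ) :
    IntervalIntegrable (pf γ w g k ζ) MeasureTheory.volume u v :=
  (pf_contOn hγ hw hg k ζ).intervalIntegrable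

variable {R W B : ℝ}

lemma pf_norm_le (hR : ∀ t ∈ uIcc u v, ‖γ t‖ ≤ R) (hW : ∀ t ∈ uIcc u v, ‖w t‖ ≤ W)
    (hB : ∀ t ∈ uIcc u v, ‖g t‖ ≤ B) (hR0 : 0 ≤ R) (hB0 : 0 ≤ B)
    (k : ℕ) (ζ : ℂ) {t : ℝ} (ht : t ∈ uIcc u v) :
    ‖pf γ w g k ζ t‖ ≤ W * Real.exp (R * ‖ζ‖) * B * R ^ k := by
  have hre : (-(Complex.I * γ t * ζ)).re ≤ R * ‖ζ‖ := by
    calc (-(Complex.I * γ t * ζ)).re ≤ ‖-(Complex.I * γ t * ζ)‖ := Complex.re_le_norm _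
      _ = ‖γ t‖ * ‖ζ‖ := by
          rw [norm_neg, norm_mul, norm_mul, Complex.norm_I, one_mul]
      _ ≤ R * ‖ζ‖ := by gcongr; exact hR t ht
  have h1 : ‖pf γ w g k ζ t‖
      = ‖w t‖ * ‖γ t‖ ^ k * Real.exp ((-(Complex.I * γ t * ζ)).re) * ‖g t‖ := by
    rw [pf, norm_smul, norm_mul, norm_mul, norm_pow, norm_mul, norm_neg, Complex.norm_I,
      one_mul, Complex.norm_exp]
  have hW0 : 0 ≤ W := (norm_nonneg (w t)).trans (hW t ht)
  rw [h1]
  calc ‖w t‖ * ‖γ t‖ ^ k * Real.exp ((-(Complex.I * γ t * ζ)).re) * ‖g t‖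
      ≤ W * R ^ k * Real.exp (R * ‖ζ‖) * B := by
        gcongr <;>
          first
            | exact (norm_nonneg _).trans (hW t ht)
            | exact hW t ht
            | exact hR t ht
            | exact hB t ht
            | exact Real.exp_le_exp.2 hre
            | positivity
    _ = W * Real.exp (R * ‖ζ‖) * B * R ^ k := by ring

lemma pI_norm_le (hR : ∀ t ∈ uIcc u v, ‖γ t‖ ≤ R) (hW : ∀ t ∈ uIcc u v, ‖w t‖ ≤ W)
    (hB : ∀ t ∈ uIcc u v, ‖g t‖ ≤ B) (hR0 : 0 ≤ R) (hB0 : 0 ≤ B)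
    (k : ℕ) (ζ : ℂ) :
    ‖pI γ w g u v k ζ‖ ≤ W * Real.exp (R * ‖ζ‖) * B * |v - u| * R ^ k := by
  have := intervalIntegral.norm_integral_le_of_norm_le_const
    (C := W * Real.exp (R * ‖ζ‖) * B * R ^ k) (f := pf γ w g k ζ) (a := u) (b := v)
    (fun t ht => pf_norm_le hR hW hB hR0 hB0 k ζ (uIoc_subset_uIcc ht))
  calc ‖pI γ w g u v k ζ‖ ≤ W * Real.exp (R * ‖ζ‖) * B * R ^ k * |v - u| := this
    _ = W * Real.exp (R * ‖ζ‖) * B * |v - u| * R ^ k := by ring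

lemma pI_hasDerivAt (hγ : Continuous γ) (hw : Continuous w)
    (hg : ContinuousOn g (uIcc u v))
    (hR : ∀ t ∈ uIcc u v, ‖γ t‖ ≤ R) (hW : ∀ t ∈ uIcc u v, ‖w t‖ ≤ W)
    (hB : ∀ t ∈ uIcc u v, ‖g t‖ ≤ B) (hR0 : 0 ≤ R) (hB0 : 0 ≤ B)
    (k : ℕ) (ζ : ℂ) :
    HasDerivAt (fun ξ => pI γ w g u v k ξ) (pI γ w g u v (k + 1) ζ) ζ := by
  have key := intervalIntegral.hasDerivAt_integral_of_dominated_loc_of_deriv_le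
    (μ := MeasureTheory.volume) (F := fun (ξ : ℂ) t => pf γ w g k ξ t)
    (F' := fun (ξ : ℂ) t => pf γ w g (k + 1) ξ t) (x₀ := ζ)
    (bound := fun _ => W * Real.exp (R * (‖ζ‖ + 1)) * B * R ^ (k + 1))
    (a := u) (b := v) (Metric.ball_mem_nhds ζ one_pos)
    (Filter.Eventually.of_forall fun ξ =>
      ((pf_contOn hγ hw hg k ξ).mono uIoc_subset_uIcc).aestronglyMeasurable
        measurableSet_uIoc)
    (pf_intervalIntegrable hγ hw hg k ζ)
    (((pf_contOn hγ hw hg (k + 1) ζ).mono uIoc_subset_uIcc).aestronglyMeasurable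
        measurableSet_uIoc)
    ?_ intervalIntegrable_const ?_
  · exact key.2
  · -- bound
    refine Filter.Eventually.of_forall fun t ht x hx => ?_
    have hxn : ‖x‖ ≤ ‖ζ‖ + 1 := by
      have h1 : ‖x‖ - ‖ζ‖ ≤ dist x ζ := by
        rw [dist_eq_norm]; exact norm_sub_norm_le x ζ
      have h2 : dist x ζ < 1 := mem_ball.mp hx
      linarith
    calc ‖pf γ w g (k + 1) x t‖ ≤ W * Real.exp (R * ‖x‖) * B * R ^ (k + 1) :=
          pf_norm_le hR hW hB hR0 hB0 (k + 1) x (uIoc_subset_uIcc ht)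
      _ ≤ W * Real.exp (R * (‖ζ‖ + 1)) * B * R ^ (k + 1) := by
          gcongr <;>
            first
              | exact (norm_nonneg (w t)).trans (hW t (uIoc_subset_uIcc ht))
              | exact Real.exp_le_exp.2 (by nlinarith [norm_nonneg x])
              | positivity
  · -- differentiability
    refine Filter.Eventually.of_forall fun t ht x hx => ?_
    have he : HasDerivAt (fun ξ : ℂ => Complex.exp (-(Complex.I * γ t * ξ)))
        (-(Complex.I * γ t) * Complex.exp (-(Complex.I * γ t * x))) x := by
      have h0 : HasDerivAt (fun ξ : ℂ => -(Complex.I * γ t) * ξ) (-(Complex.I * γ t)) x := by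
        simpa using (hasDerivAt_id x).const_mul (-(Complex.I * γ t))
      have h1 := h0.cexp
      simp only [neg_mul] at h1 ⊢
      simpa [mul_comm] using h1
    have hd := (he.const_mul (w t * (-Complex.I * γ t) ^ k)).smul_const (g t)
    have hscal : w t * (-Complex.I * γ t) ^ (k + 1) * Complex.exp (-(Complex.I * γ t * x))
        = w t * (-Complex.I * γ t) ^ k * (-(Complex.I * γ t) * Complex.exp (-(Complex.I * γ t * x))) := by
      ring
    show HasDerivAt (fun ξ : ℂ => (w t * (-Complex.I * γ t) ^ k *
        Complex.exp (-(Complex.I * γ t * ξ))) • g t)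
      ((w t * (-Complex.I * γ t) ^ (k + 1) * Complex.exp (-(Complex.I * γ t * x))) • g t) x
    rw [hscal]
    exact hd

end Stmt17Aux
end Piece
section PieceSum

open Complex MeasureTheory intervalIntegral Set Filter Metric

namespace Stmt17Aux

variable {E : Type*} [NormedAddCommGroup E] [NormedSpace ℂ E] [CompleteSpace E]
variable {γ w : ℝ → ℂ} {g : ℝ → E} {u v : ℝ} {R W B : ℝ}

lemma pf_tsum_eq {c : ℕ → ℂ} (hc : ExpTypeZero c) (ζ : ℂ) (t : ℝ) :
    ∑' k : ℕ, (c k / (Nat.factorial k : ℂ) * Complex.I ^ k) • pf γ w g k ζ t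
      = (w t * Complex.exp (-(Complex.I * γ t * ζ))) •
          ((∑' k : ℕ, c k / (Nat.factorial k : ℂ) * (γ t) ^ k) • g t) := by
  have key : ∀ k : ℕ, (c k / (Nat.factorial k : ℂ) * Complex.I ^ k) • pf γ w g k ζ t
      = (c k / (Nat.factorial k : ℂ) * (γ t) ^ k) •
          ((w t * Complex.exp (-(Complex.I * γ t * ζ))) • g t) := by
    intro k
    rw [pf, smul_smul, smul_smul]
    congr 1
    have hI : Complex.I ^ k * (-Complex.I * γ t) ^ k = (γ t) ^ k := by
      rw [← mul_pow]
      congr 1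
      rw [← mul_assoc, mul_neg, Complex.I_mul_I, neg_neg, one_mul]
    linear_combination
      (c k / (Nat.factorial k : ℂ) * (w t * Complex.exp (-(Complex.I * γ t * ζ)))) * hI
  rw [tsum_congr key, (summableP hc (γ t)).tsum_smul_const, smul_comm]

lemma norm_smul_pf_le {c : ℕ → ℂ} {C : ℝ} (hC : ∀ k, ‖c k‖ ≤ C * 1 ^ k)
    (hC0 : 0 ≤ C)
    (hR : ∀ t ∈ uIcc u v, ‖γ t‖ ≤ R) (hW : ∀ t ∈ uIcc u v, ‖w t‖ ≤ W)
    (hB : ∀ t ∈ uIcc u v, ‖g t‖ ≤ B) (hR0 : 0 ≤ R) (hB0 : 0 ≤ B)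
    (k : ℕ) (ζ : ℂ) {t : ℝ} (ht : t ∈ uIcc u v) :
    ‖(c k / (Nat.factorial k : ℂ) * Complex.I ^ k) • pf γ w g k ζ t‖
      ≤ C * W * Real.exp (R * ‖ζ‖) * B * (R ^ k / Nat.factorial k) := by
  have hW0 : 0 ≤ W := (norm_nonneg (w t)).trans (hW t ht)
  have h1 : ‖(c k / (Nat.factorial k : ℂ) * Complex.I ^ k)‖ ≤ C / Nat.factorial k := by
    rw [norm_mul, norm_pow, Complex.norm_I, one_pow, mul_one, norm_div,
      Complex.norm_natCast]
    have := hC k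
    rw [one_pow, mul_one] at this
    gcongr
  rw [norm_smul]
  calc ‖c k / (Nat.factorial k : ℂ) * Complex.I ^ k‖ * ‖pf γ w g k ζ t‖
      ≤ (C / Nat.factorial k) * (W * Real.exp (R * ‖ζ‖) * B * R ^ k) := by
        gcongr <;>
          first
            | exact h1
            | exact pf_norm_le hR hW hB hR0 hB0 k ζ ht
            | positivity
    _ = C * W * Real.exp (R * ‖ζ‖) * B * (R ^ k / Nat.factorial k) := by ring

lemma pI_hasSum {c : ℕ → ℂ} (hc : ExpTypeZero c)
    (hγ : Continuous γ) (hw : Continuous w) (hg : ContinuousOn g (uIcc u v))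
    (hR : ∀ t ∈ uIcc u v, ‖γ t‖ ≤ R) (hW : ∀ t ∈ uIcc u v, ‖w t‖ ≤ W)
    (hB : ∀ t ∈ uIcc u v, ‖g t‖ ≤ B) (hR0 : 0 ≤ R) (hB0 : 0 ≤ B) (ζ : ℂ) :
    HasSum (fun k : ℕ => (c k / (Nat.factorial k : ℂ) * Complex.I ^ k) • pI γ w g u v k ζ)
      (∫ t in u..v, (w t * Complex.exp (-(Complex.I * γ t * ζ))) •
        ((∑' k : ℕ, c k / (Nat.factorial k : ℂ) * (γ t) ^ k) • g t)) := by
  obtain ⟨C, hC0, hC⟩ := hc 1 one_pos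
  have hμlt : MeasureTheory.volume (Set.uIoc u v) < ⊤ := measure_Ioc_lt_top
  have hint : ∀ k, Integrable
      (fun t => (c k / (Nat.factorial k : ℂ) * Complex.I ^ k) • pf γ w g k ζ t)
      (MeasureTheory.volume.restrict (Set.uIoc u v)) := fun k =>
    (intervalIntegrable_iff.mp (pf_intervalIntegrable hγ hw hg k ζ)).smul _
  have hnorm : ∀ k, ∫ t in Set.uIoc u v,
        ‖(c k / (Nat.factorial k : ℂ) * Complex.I ^ k) • pf γ w g k ζ t‖
      ≤ (C * W * Real.exp (R * ‖ζ‖) * B * (MeasureTheory.volume (Set.uIoc u v)).toReal)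
          * (R ^ k / Nat.factorial k) := by
    intro k
    have hb : ∀ t ∈ Set.uIoc u v,
        ‖‖(c k / (Nat.factorial k : ℂ) * Complex.I ^ k) • pf γ w g k ζ t‖‖
          ≤ C * W * Real.exp (R * ‖ζ‖) * B * (R ^ k / Nat.factorial k) := by
      intro t ht
      rw [norm_norm]
      exact norm_smul_pf_le hC hC0.le hR hW hB hR0 hB0 k ζ (uIoc_subset_uIcc ht)
    calc ∫ t in Set.uIoc u v, ‖(c k / (Nat.factorial k : ℂ) * Complex.I ^ k) • pf γ w g k ζ t‖
        ≤ ‖∫ t in Set.uIoc u v,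
            ‖(c k / (Nat.factorial k : ℂ) * Complex.I ^ k) • pf γ w g k ζ t‖‖ :=
          Real.le_norm_self _
      _ ≤ (C * W * Real.exp (R * ‖ζ‖) * B * (R ^ k / Nat.factorial k))
            * (MeasureTheory.volume (Set.uIoc u v)).toReal :=
          norm_setIntegral_le_of_norm_le_const hμlt hb
      _ = (C * W * Real.exp (R * ‖ζ‖) * B * (MeasureTheory.volume (Set.uIoc u v)).toReal)
            * (R ^ k / Nat.factorial k) := by ring
  have hsum_norm : Summable fun k : ℕ => ∫ t in Set.uIoc u v,
      ‖(c k / (Nat.factorial k : ℂ) * Complex.I ^ k) • pf γ w g k ζ t‖ := by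
    refine Summable.of_nonneg_of_le
      (fun k => integral_nonneg fun t => norm_nonneg _) (fun k => hnorm k)
      (((Real.summable_pow_div_factorial R).mul_left _))
  have hs := MeasureTheory.hasSum_integral_of_summable_integral_norm
    (μ := MeasureTheory.volume.restrict (Set.uIoc u v))
    (F := fun k t => (c k / (Nat.factorial k : ℂ) * Complex.I ^ k) • pf γ w g k ζ t)
    hint hsum_norm
  have hptw : (fun t => ∑' k : ℕ,
        (c k / (Nat.factorial k : ℂ) * Complex.I ^ k) • pf γ w g k ζ t)
      = fun t => (w t * Complex.exp (-(Complex.I * γ t * ζ))) •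
          ((∑' k : ℕ, c k / (Nat.factorial k : ℂ) * (γ t) ^ k) • g t) :=
    funext fun t => pf_tsum_eq hc ζ t
  rw [hptw] at hs
  have hs2 := hs.const_smul (if (u : ℝ) ≤ v then (1 : ℝ) else -1)
  have heq : ∀ k, (if (u : ℝ) ≤ v then (1 : ℝ) else -1) •
        ∫ t in Set.uIoc u v, (c k / (Nat.factorial k : ℂ) * Complex.I ^ k) • pf γ w g k ζ t
      = (c k / (Nat.factorial k : ℂ) * Complex.I ^ k) • pI γ w g u v k ζ := by
    intro k
    rw [pI, intervalIntegral_eq_integral_uIoc, MeasureTheory.integral_smul, smul_comm]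
  have htgt : (if (u : ℝ) ≤ v then (1 : ℝ) else -1) •
        ∫ t in Set.uIoc u v, (w t * Complex.exp (-(Complex.I * γ t * ζ))) •
          ((∑' k : ℕ, c k / (Nat.factorial k : ℂ) * (γ t) ^ k) • g t)
      = ∫ t in u..v, (w t * Complex.exp (-(Complex.I * γ t * ζ))) •
          ((∑' k : ℕ, c k / (Nat.factorial k : ℂ) * (γ t) ^ k) • g t) := by
    rw [intervalIntegral_eq_integral_uIoc]
  rw [htgt] at hs2
  exact (funext heq : _) ▸ hs2

end Stmt17Aux
end PieceSum
section Bundle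

open Complex MeasureTheory intervalIntegral Set Filter Metric

namespace Stmt17Aux

variable {E : Type*} [NormedAddCommGroup E] [NormedSpace ℂ E]

/-- Bundled hypotheses for one contour piece. -/
structure PieceOK (γ w : ℝ → ℂ) (g : ℝ → E) (u v R : ℝ) : Prop where
  hγ : Continuous γ
  hw : Continuous w
  hg : ContinuousOn g (Set.uIcc u v)
  hR : ∀ t ∈ Set.uIcc u v, ‖γ t‖ ≤ R
  hR0 : 0 ≤ R

variable {γ w : ℝ → ℂ} {g : ℝ → E} {u v R : ℝ}

lemma PieceOK.exists_W (h : PieceOK γ w g u v R) :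
    ∃ W : ℝ, 0 ≤ W ∧ ∀ t ∈ Set.uIcc u v, ‖w t‖ ≤ W := by
  obtain ⟨W, hW⟩ := isCompact_uIcc.exists_bound_of_continuousOn h.hw.continuousOn
  exact ⟨max W 0, le_max_right _ _, fun t ht => (hW t ht).trans (le_max_left _ _)⟩

lemma PieceOK.exists_B (h : PieceOK γ w g u v R) :
    ∃ B : ℝ, 0 ≤ B ∧ ∀ t ∈ Set.uIcc u v, ‖g t‖ ≤ B := by
  obtain ⟨B, hB⟩ := isCompact_uIcc.exists_bound_of_continuousOn h.hg
  exact ⟨max B 0, le_max_right _ _, fun t ht => (hB t ht).trans (le_max_left _ _)⟩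

lemma PieceOK.hasDerivAt (h : PieceOK γ w g u v R) (k : ℕ) (ζ : ℂ) :
    HasDerivAt (fun ξ => pI γ w g u v k ξ) (pI γ w g u v (k + 1) ζ) ζ := by
  obtain ⟨W, hW0, hW⟩ := h.exists_W
  obtain ⟨B, hB0, hB⟩ := h.exists_B
  exact pI_hasDerivAt h.hγ h.hw h.hg h.hR hW hB h.hR0 hB0 k ζ

lemma PieceOK.norm_le (h : PieceOK γ w g u v R) (ζ : ℂ) :
    ∃ D : ℝ, 0 ≤ D ∧ ∀ k : ℕ, ‖pI γ w g u v k ζ‖ ≤ D * R ^ k := by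
  obtain ⟨W, hW0, hW⟩ := h.exists_W
  obtain ⟨B, hB0, hB⟩ := h.exists_B
  refine ⟨W * Real.exp (R * ‖ζ‖) * B * |v - u|, by positivity, fun k => ?_⟩
  exact pI_norm_le h.hR hW hB h.hR0 hB0 k ζ

lemma PieceOK.hasSum [CompleteSpace E] (h : PieceOK γ w g u v R)
    {c : ℕ → ℂ} (hc : ExpTypeZero c) (ζ : ℂ) :
    HasSum (fun k : ℕ => (c k / (Nat.factorial k : ℂ) * Complex.I ^ k) • pI γ w g u v k ζ)
      (∫ t in u..v, (w t * Complex.exp (-(Complex.I * γ t * ζ))) •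
        ((∑' k : ℕ, c k / (Nat.factorial k : ℂ) * (γ t) ^ k) • g t)) := by
  obtain ⟨W, hW0, hW⟩ := h.exists_W
  obtain ⟨B, hB0, hB⟩ := h.exists_B
  exact pI_hasSum hc h.hγ h.hw h.hg h.hR hW hB h.hR0 hB0 ζ

/- Geometry: points of the stadium contour avoid the segment. -/

lemma mem_seg_iff {a b : ℝ} {z : ℂ} : z ∈ seg a b ↔ z.im = 0 ∧ a ≤ z.re ∧ z.re ≤ b := by
  constructor
  · rintro ⟨x, hx, rfl⟩
    exact ⟨by simp, by simpa using hx.1, by simpa using hx.2⟩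
  · rintro ⟨h0, h1, h2⟩
    exact ⟨z.re, ⟨h1, h2⟩, Complex.ext (by simp) (by simp [h0])⟩

lemma horiz_not_mem {a b r : ℝ} (hr : r ≠ 0) (t : ℝ) :
    (t : ℂ) + (r : ℂ) * Complex.I ∈ (seg a b)ᶜ := by
  intro h
  rcases mem_seg_iff.mp h with ⟨h0, -, -⟩
  simp at h0
  exact hr h0

lemma horiz_not_mem' {a b r : ℝ} (hr : r ≠ 0) (t : ℝ) :
    (t : ℂ) - (r : ℂ) * Complex.I ∈ (seg a b)ᶜ := by
  intro h
  rcases mem_seg_iff.mp h with ⟨h0, -, -⟩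
  simp at h0
  exact hr h0

lemma arc_right_not_mem {a b r : ℝ} (hr : 0 < r) {θ : ℝ}
    (hθ : θ ∈ Set.uIcc (π / 2) (-(π / 2))) :
    (b : ℂ) + (r : ℂ) * Complex.exp ((θ : ℂ) * Complex.I) ∈ (seg a b)ᶜ := by
  have hpi := Real.pi_pos
  rw [Set.uIcc_of_ge (by linarith)] at hθ
  intro h
  rcases mem_seg_iff.mp h with ⟨h0, -, h2⟩
  have him : r * Real.sin θ = 0 := by
    simpa [Complex.exp_ofReal_mul_I_re, Complex.exp_ofReal_mul_I_im] using h0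
  have hsin : Real.sin θ = 0 := by
    rcases mul_eq_zero.mp him with h | h
    · exact absurd h hr.ne'
    · exact h
  have hθ0 : θ = 0 :=
    (Real.sin_eq_zero_iff_of_lt_of_lt (by linarith [hθ.1]) (by linarith [hθ.2])).mp hsin
  have hre : ((b : ℂ) + (r : ℂ) * Complex.exp ((θ : ℂ) * Complex.I)).re
      = b + r * Real.cos θ := by
    simp [Complex.exp_ofReal_mul_I_re, Complex.exp_ofReal_mul_I_im]
  rw [hre, hθ0, Real.cos_zero, mul_one] at h2
  linarith

lemma arc_left_not_mem {a b r : ℝ} (hr : 0 < r) {θ : ℝ}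
    (hθ : θ ∈ Set.uIcc (3 * π / 2) (π / 2)) :
    (a : ℂ) + (r : ℂ) * Complex.exp ((θ : ℂ) * Complex.I) ∈ (seg a b)ᶜ := by
  have hpi := Real.pi_pos
  rw [Set.uIcc_of_ge (by linarith)] at hθ
  intro h
  rcases mem_seg_iff.mp h with ⟨h0, h1, -⟩
  have him : r * Real.sin θ = 0 := by
    simpa [Complex.exp_ofReal_mul_I_re, Complex.exp_ofReal_mul_I_im] using h0
  have hsin : Real.sin θ = 0 := by
    rcases mul_eq_zero.mp him with h | h
    · exact absurd h hr.ne'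
    · exact h
  have hsin' : Real.sin (θ - π) = 0 := by
    rw [Real.sin_sub, Real.sin_pi, Real.cos_pi]
    simp [hsin]
  have hθπ : θ = π := by
    have := (Real.sin_eq_zero_iff_of_lt_of_lt
      (x := θ - π) (by linarith [hθ.1]) (by linarith [hθ.2])).mp hsin'
    linarith
  have hre : ((a : ℂ) + (r : ℂ) * Complex.exp ((θ : ℂ) * Complex.I)).re
      = a + r * Real.cos θ := by
    simp [Complex.exp_ofReal_mul_I_re, Complex.exp_ofReal_mul_I_im]
  rw [hre, hθπ, Real.cos_pi] at h1
  linarith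

lemma abs_le_abs_add_abs_of_uIcc {a b t : ℝ} (ht : t ∈ Set.uIcc a b) : |t| ≤ |a| + |b| := by
  have h1 : |t| ≤ max |a| |b| := by
    rcases le_total a b with h | h
    · rw [Set.uIcc_of_le h] at ht
      exact abs_le_max_abs_abs ht.1 ht.2
    · rw [Set.uIcc_of_ge h] at ht
      exact (abs_le_max_abs_abs ht.1 ht.2).trans (by rw [max_comm])
  exact h1.trans (max_le (le_add_of_nonneg_right (abs_nonneg _))
    (le_add_of_nonneg_left (abs_nonneg _)))

end Stmt17Aux
end Bundle
section Contour

open Complex MeasureTheory intervalIntegral Set Filter Metric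

namespace Stmt17Aux

variable {E : Type*} [NormedAddCommGroup E] [NormedSpace ℂ E]

def gam1 (r : ℝ) : ℝ → ℂ := fun t => (t : ℂ) + (r : ℂ) * Complex.I
def gam2 (b r : ℝ) : ℝ → ℂ := fun θ => (b : ℂ) + (r : ℂ) * Complex.exp ((θ : ℂ) * Complex.I)
def gam3 (r : ℝ) : ℝ → ℂ := fun t => (t : ℂ) - (r : ℂ) * Complex.I
def wOne : ℝ → ℂ := fun _ => 1
def wArc (r : ℝ) : ℝ → ℂ := fun θ => (r : ℂ) * Complex.I * Complex.exp ((θ : ℂ) * Complex.I)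

lemma cont_gam1 (r : ℝ) : Continuous (gam1 r) :=
  Complex.continuous_ofReal.add continuous_const
lemma cont_gam2 (b r : ℝ) : Continuous (gam2 b r) :=
  continuous_const.add (continuous_const.mul
    ((Complex.continuous_ofReal.mul continuous_const).cexp))
lemma cont_gam3 (r : ℝ) : Continuous (gam3 r) :=
  Complex.continuous_ofReal.sub continuous_const
lemma cont_wArc (r : ℝ) : Continuous (wArc r) :=
  continuous_const.mul ((Complex.continuous_ofReal.mul continuous_const).cexp)

lemma ok1 {a b r : ℝ} {F : ℂ → E} (hF : DifferentiableOn ℂ F (seg a b)ᶜ) (hr : 0 < r) :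
    PieceOK (gam1 r) wOne (fun t => F (gam1 r t)) a b (|a| + |b| + |r|) := by
  refine ⟨cont_gam1 r, continuous_const, ?_, ?_, by positivity⟩
  · exact hF.continuousOn.comp (cont_gam1 r).continuousOn
      (fun t _ => horiz_not_mem hr.ne' t)
  · intro t ht
    calc ‖(t : ℂ) + (r : ℂ) * Complex.I‖ ≤ ‖(t : ℂ)‖ + ‖(r : ℂ) * Complex.I‖ :=
          norm_add_le _ _
      _ = |t| + |r| := by simp
      _ ≤ (|a| + |b|) + |r| := by gcongr; exact abs_le_abs_add_abs_of_uIcc ht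
      _ = |a| + |b| + |r| := by ring

lemma ok3 {a b r : ℝ} {F : ℂ → E} (hF : DifferentiableOn ℂ F (seg a b)ᶜ) (hr : 0 < r) :
    PieceOK (gam3 r) wOne (fun t => F (gam3 r t)) b a (|a| + |b| + |r|) := by
  refine ⟨cont_gam3 r, continuous_const, ?_, ?_, by positivity⟩
  · exact hF.continuousOn.comp (cont_gam3 r).continuousOn
      (fun t _ => horiz_not_mem' hr.ne' t)
  · intro t ht
    calc ‖(t : ℂ) - (r : ℂ) * Complex.I‖ ≤ ‖(t : ℂ)‖ + ‖(r : ℂ) * Complex.I‖ :=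
          norm_sub_le _ _
      _ = |t| + |r| := by simp
      _ ≤ (|b| + |a|) + |r| := by gcongr; exact abs_le_abs_add_abs_of_uIcc ht
      _ = |a| + |b| + |r| := by ring

lemma ok2 {a b r : ℝ} {F : ℂ → E} (hF : DifferentiableOn ℂ F (seg a b)ᶜ) (hr : 0 < r) :
    PieceOK (gam2 b r) (wArc r) (fun θ => F (gam2 b r θ)) (π / 2) (-(π / 2))
      (|a| + |b| + |r|) := by
  refine ⟨cont_gam2 b r, cont_wArc r, ?_, ?_, by positivity⟩
  · exact hF.continuousOn.comp (cont_gam2 b r).continuousOn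
      (fun θ hθ => arc_right_not_mem hr hθ)
  · intro θ _
    calc ‖(b : ℂ) + (r : ℂ) * Complex.exp ((θ : ℂ) * Complex.I)‖
        ≤ ‖(b : ℂ)‖ + ‖(r : ℂ) * Complex.exp ((θ : ℂ) * Complex.I)‖ := norm_add_le _ _
      _ = |b| + |r| := by
          simp [Complex.norm_exp_ofReal_mul_I]
      _ ≤ |a| + |b| + |r| := by
          have := abs_nonneg a; linarith

lemma ok4 {a b r : ℝ} {F : ℂ → E} (hF : DifferentiableOn ℂ F (seg a b)ᶜ) (hr : 0 < r) :
    PieceOK (gam2 a r) (wArc r) (fun θ => F (gam2 a r θ)) (3 * π / 2) (π / 2)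
      (|a| + |b| + |r|) := by
  refine ⟨cont_gam2 a r, cont_wArc r, ?_, ?_, by positivity⟩
  · exact hF.continuousOn.comp (cont_gam2 a r).continuousOn
      (fun θ hθ => arc_left_not_mem hr hθ)
  · intro θ _
    calc ‖(a : ℂ) + (r : ℂ) * Complex.exp ((θ : ℂ) * Complex.I)‖
        ≤ ‖(a : ℂ)‖ + ‖(r : ℂ) * Complex.exp ((θ : ℂ) * Complex.I)‖ := norm_add_le _ _
      _ = |a| + |r| := by
          simp [Complex.norm_exp_ofReal_mul_I]
      _ ≤ |a| + |b| + |r| := by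
          have := abs_nonneg b; linarith

/-- The candidate for the `k`-th derivative of `fourierCpt a b r F`. -/
def AA (a b r : ℝ) (F : ℂ → E) (k : ℕ) (ζ : ℂ) : E :=
  pI (gam1 r) wOne (fun t => F (gam1 r t)) a b k ζ +
  pI (gam2 b r) (wArc r) (fun θ => F (gam2 b r θ)) (π / 2) (-(π / 2)) k ζ +
  pI (gam3 r) wOne (fun t => F (gam3 r t)) b a k ζ +
  pI (gam2 a r) (wArc r) (fun θ => F (gam2 a r θ)) (3 * π / 2) (π / 2) k ζ

lemma fourierCpt_eq_AA_zero (a b r : ℝ) (F : ℂ → E) (ζ : ℂ) :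
    fourierCpt a b r F ζ = AA a b r F 0 ζ := by
  unfold fourierCpt stadiumIntegral AA pI
  congr 1
  · congr 1
    · congr 1
      · apply intervalIntegral.integral_congr
        intro t _
        simp [pf, gam1, wOne]
      · apply intervalIntegral.integral_congr
        intro θ _
        simp [pf, gam2, wArc, smul_smul]
    · apply intervalIntegral.integral_congr
      intro t _
      simp [pf, gam3, wOne]
  · apply intervalIntegral.integral_congr
    intro θ _
    simp [pf, gam2, wArc, smul_smul]

lemma AA_hasDerivAt {a b r : ℝ} {F : ℂ → E} (hF : DifferentiableOn ℂ F (seg a b)ᶜ)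
    (hr : 0 < r) (k : ℕ) (ζ : ℂ) :
    HasDerivAt (fun ξ => AA a b r F k ξ) (AA a b r F (k + 1) ζ) ζ := by
  simp only [AA]
  exact ((((ok1 hF hr).hasDerivAt k ζ).add ((ok2 hF hr).hasDerivAt k ζ)).add
    ((ok3 hF hr).hasDerivAt k ζ)).add ((ok4 hF hr).hasDerivAt k ζ)

lemma AA_iteratedDeriv {a b r : ℝ} {F : ℂ → E} (hF : DifferentiableOn ℂ F (seg a b)ᶜ)
    (hr : 0 < r) : ∀ (k : ℕ) (ζ : ℂ),
    iteratedDeriv k (fourierCpt a b r F) ζ = AA a b r F k ζ := by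
  intro k
  induction k with
  | zero =>
    intro ζ
    rw [iteratedDeriv_zero]
    exact fourierCpt_eq_AA_zero a b r F ζ
  | succ k ih =>
    intro ζ
    rw [iteratedDeriv_succ, funext ih]
    exact (AA_hasDerivAt hF hr k ζ).deriv

lemma norm_add4_le (x1 x2 x3 x4 : E) :
    ‖x1 + x2 + x3 + x4‖ ≤ ‖x1‖ + ‖x2‖ + ‖x3‖ + ‖x4‖ := by
  have n1 := norm_add_le (x1 + x2 + x3) x4
  have n2 := norm_add_le (x1 + x2) x3
  have n3 := norm_add_le x1 x2
  linarith

lemma AA_norm_le {a b r : ℝ} {F : ℂ → E} (hF : DifferentiableOn ℂ F (seg a b)ᶜ)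
    (hr : 0 < r) (ζ : ℂ) :
    ∃ D : ℝ, 0 ≤ D ∧ ∀ k : ℕ, ‖AA a b r F k ζ‖ ≤ D * (|a| + |b| + |r|) ^ k := by
  obtain ⟨D1, hD1, h1⟩ := (ok1 hF hr).norm_le ζ
  obtain ⟨D2, hD2, h2⟩ := (ok2 hF hr).norm_le ζ
  obtain ⟨D3, hD3, h3⟩ := (ok3 hF hr).norm_le ζ
  obtain ⟨D4, hD4, h4⟩ := (ok4 hF hr).norm_le ζ
  refine ⟨D1 + D2 + D3 + D4, by positivity, fun k => ?_⟩
  have hn := norm_add4_le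
    (pI (gam1 r) wOne (fun t => F (gam1 r t)) a b k ζ)
    (pI (gam2 b r) (wArc r) (fun θ => F (gam2 b r θ)) (π / 2) (-(π / 2)) k ζ)
    (pI (gam3 r) wOne (fun t => F (gam3 r t)) b a k ζ)
    (pI (gam2 a r) (wArc r) (fun θ => F (gam2 a r θ)) (3 * π / 2) (π / 2) k ζ)
  have he : (D1 + D2 + D3 + D4) * (|a| + |b| + |r|) ^ k
      = D1 * (|a| + |b| + |r|) ^ k + D2 * (|a| + |b| + |r|) ^ k
        + D3 * (|a| + |b| + |r|) ^ k + D4 * (|a| + |b| + |r|) ^ k := by ring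
  rw [AA, he]
  linarith [h1 k, h2 k, h3 k, h4 k]

lemma AA_hasSum [CompleteSpace E] {a b r : ℝ} {F : ℂ → E}
    (hF : DifferentiableOn ℂ F (seg a b)ᶜ) (hr : 0 < r)
    {c : ℕ → ℂ} (hc : ExpTypeZero c) (ζ : ℂ) :
    HasSum (fun k : ℕ => (c k / (Nat.factorial k : ℂ) * Complex.I ^ k) • AA a b r F k ζ)
      (fourierCpt a b r
        (fun z => (∑' k : ℕ, c k / (Nat.factorial k : ℂ) * z ^ k) • F z) ζ) := by
  have h1 := (ok1 hF hr).hasSum hc ζ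
  have h2 := (ok2 hF hr).hasSum hc ζ
  have h3 := (ok3 hF hr).hasSum hc ζ
  have h4 := (ok4 hF hr).hasSum hc ζ
  have h := ((h1.add h2).add h3).add h4
  have hfun : ∀ k : ℕ,
      (c k / (Nat.factorial k : ℂ) * Complex.I ^ k) • AA a b r F k ζ
        = (c k / (Nat.factorial k : ℂ) * Complex.I ^ k) •
            pI (gam1 r) wOne (fun t => F (gam1 r t)) a b k ζ
          + (c k / (Nat.factorial k : ℂ) * Complex.I ^ k) •
            pI (gam2 b r) (wArc r) (fun θ => F (gam2 b r θ)) (π / 2) (-(π / 2)) k ζ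
          + (c k / (Nat.factorial k : ℂ) * Complex.I ^ k) •
            pI (gam3 r) wOne (fun t => F (gam3 r t)) b a k ζ
          + (c k / (Nat.factorial k : ℂ) * Complex.I ^ k) •
            pI (gam2 a r) (wArc r) (fun θ => F (gam2 a r θ)) (3 * π / 2) (π / 2) k ζ := by
    intro k
    simp only [AA, smul_add]
  have htgt : fourierCpt a b r
      (fun z => (∑' k : ℕ, c k / (Nat.factorial k : ℂ) * z ^ k) • F z) ζ
      = (∫ t in a..b, (wOne t * Complex.exp (-(Complex.I * gam1 r t * ζ))) •
          ((∑' k : ℕ, c k / (Nat.factorial k : ℂ) * (gam1 r t) ^ k) • F (gam1 r t)))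
        + (∫ θ in (π/2)..(-(π/2)), (wArc r θ * Complex.exp (-(Complex.I * gam2 b r θ * ζ))) •
          ((∑' k : ℕ, c k / (Nat.factorial k : ℂ) * (gam2 b r θ) ^ k) • F (gam2 b r θ)))
        + (∫ t in b..a, (wOne t * Complex.exp (-(Complex.I * gam3 r t * ζ))) •
          ((∑' k : ℕ, c k / (Nat.factorial k : ℂ) * (gam3 r t) ^ k) • F (gam3 r t)))
        + (∫ θ in (3*π/2)..(π/2), (wArc r θ * Complex.exp (-(Complex.I * gam2 a r θ * ζ))) •
          ((∑' k : ℕ, c k / (Nat.factorial k : ℂ) * (gam2 a r θ) ^ k) • F (gam2 a r θ))) := by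
    unfold fourierCpt stadiumIntegral
    congr 1
    · congr 1
      · congr 1
        · apply intervalIntegral.integral_congr
          intro t _
          simp [gam1, wOne]
        · apply intervalIntegral.integral_congr
          intro θ _
          simp [gam2, wArc, smul_smul, mul_assoc]
      · apply intervalIntegral.integral_congr
        intro t _
        simp [gam3, wOne]
    · apply intervalIntegral.integral_congr
      intro θ _
      simp [gam2, wArc, smul_smul, mul_assoc]
  rw [htgt, funext hfun]
  exact h

end Stmt17Aux
end Contour
/-- The exchange formula `ℱ(P·F) = P(i∂)ℱ(F)` for the Fourier transform of hyperfunctions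
with real compact support `[a,b]` multiplied by an entire function
`P(z) = Σ (c_k/k!) z^k` of exponential type `0`: the product `P·F` is holomorphic outside
`[a,b]` and slowly increasing, the series `Σ (c_k/k!) i^k G^{(k)}(ζ)` (with
`G = ℱ_r F`) converges absolutely, and its sum equals `ℱ_r(P·F)(ζ)`. -/
theorem stmt17 {E : Type*} [NormedAddCommGroup E] [NormedSpace ℂ E] [CompleteSpace E]
    (a b : ℝ) (hab : a ≤ b) (F : ℂ → E) (hF : SlowlyIncreasing a b F)
    (c : ℕ → ℂ) (hc : ExpTypeZero c) (r : ℝ) (hr : 0 < r) :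
    SlowlyIncreasing a b
      (fun z => (∑' k : ℕ, c k / (Nat.factorial k : ℂ) * z ^ k) • F z) ∧
    ∀ ζ : ℂ,
      (Summable fun k : ℕ =>
        ‖((c k / (Nat.factorial k : ℂ)) * Complex.I ^ k) •
          iteratedDeriv k (fourierCpt a b r F) ζ‖) ∧
      fourierCpt a b r
          (fun z => (∑' k : ℕ, c k / (Nat.factorial k : ℂ) * z ^ k) • F z) ζ =
        ∑' k : ℕ, ((c k / (Nat.factorial k : ℂ)) * Complex.I ^ k) •
          iteratedDeriv k (fourierCpt a b r F) ζ := by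
  obtain ⟨hFd, hFb⟩ := hF
  constructor
  · constructor
    · exact (Stmt17Aux.P_diff hc).differentiableOn.smul hFd
    · intro n hn
      have hn0 : (0 : ℝ) < (n : ℝ) := by exact_mod_cast hn
      obtain ⟨C, hC0, hP⟩ := Stmt17Aux.P_le hc (ε := 1 / (2 * (n : ℝ))) (by positivity)
      obtain ⟨K, hK⟩ := hFb (2 * n) (by omega)
      refine ⟨C * K * Real.exp (1 / 2 : ℝ), ?_⟩
      rintro y ⟨z, hz, rfl⟩
      obtain ⟨hzim, hzd⟩ := hz
      have hz2 : z ∈ Sreg a b (2 * n) := by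
        constructor
        · show |z.im| < ((2 * n : ℕ) : ℝ)
          push_cast
          linarith
        · show 1 / ((2 * n : ℕ) : ℝ) < _
          refine lt_of_le_of_lt ?_ hzd
          push_cast
          apply one_div_le_one_div_of_le hn0
          linarith
      have hKz : ‖F z‖ * Real.exp (-|z.re| / ((2 * n : ℕ) : ℝ)) ≤ K := hK ⟨z, hz2, rfl⟩
      push_cast at hKz
      have hFz : ‖F z‖ ≤ K * Real.exp (|z.re| / (2 * (n : ℝ))) := by
        have he : Real.exp (-|z.re| / (2 * (n : ℝ))) * Real.exp (|z.re| / (2 * (n : ℝ)))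
            = 1 := by
          rw [← Real.exp_add]
          ring_nf
          exact Real.exp_zero
        calc ‖F z‖
            = ‖F z‖ * Real.exp (-|z.re| / (2 * (n : ℝ))) * Real.exp (|z.re| / (2 * (n : ℝ))) := by
              rw [mul_assoc, he, mul_one]
          _ ≤ K * Real.exp (|z.re| / (2 * (n : ℝ))) :=
              mul_le_mul_of_nonneg_right hKz (Real.exp_nonneg _)
      have hzabs : ‖z‖ ≤ |z.re| + (n : ℝ) := by
        have h := Complex.norm_le_abs_re_add_abs_im z
        linarith
      have hPz : ‖∑' k : ℕ, c k / (Nat.factorial k : ℂ) * z ^ k‖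
          ≤ C * Real.exp ((|z.re| + (n : ℝ)) * (1 / (2 * (n : ℝ)))) := by
        refine (hP z).trans (mul_le_mul_of_nonneg_left (Real.exp_le_exp.2 ?_) hC0.le)
        calc 1 / (2 * (n : ℝ)) * ‖z‖ ≤ 1 / (2 * (n : ℝ)) * (|z.re| + (n : ℝ)) := by
              gcongr
          _ = (|z.re| + (n : ℝ)) * (1 / (2 * (n : ℝ))) := by ring
      show ‖(∑' k : ℕ, c k / (Nat.factorial k : ℂ) * z ^ k) • F z‖
          * Real.exp (-|z.re| / (n : ℝ)) ≤ C * K * Real.exp (1 / 2 : ℝ)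
      calc ‖(∑' k : ℕ, c k / (Nat.factorial k : ℂ) * z ^ k) • F z‖
            * Real.exp (-|z.re| / (n : ℝ))
          = ‖∑' k : ℕ, c k / (Nat.factorial k : ℂ) * z ^ k‖ * ‖F z‖
            * Real.exp (-|z.re| / (n : ℝ)) := by rw [norm_smul]
        _ ≤ (C * Real.exp ((|z.re| + (n : ℝ)) * (1 / (2 * (n : ℝ)))))
              * (K * Real.exp (|z.re| / (2 * (n : ℝ))))
              * Real.exp (-|z.re| / (n : ℝ)) := by
            apply mul_le_mul_of_nonneg_right _ (Real.exp_nonneg _)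
            exact mul_le_mul hPz hFz (norm_nonneg _) (by positivity)
        _ = C * K * Real.exp ((|z.re| + (n : ℝ)) * (1 / (2 * (n : ℝ)))
              + |z.re| / (2 * (n : ℝ)) + -|z.re| / (n : ℝ)) := by
            rw [Real.exp_add, Real.exp_add]
            ring
        _ = C * K * Real.exp (1 / 2 : ℝ) := by
            congr 1
            field_simp
            congr 1
            rw [div_eq_iff (by positivity)]
            ring
  · intro ζ
    have hiter := Stmt17Aux.AA_iteratedDeriv hFd hr
    constructor
    · obtain ⟨D, hD0, hD⟩ := Stmt17Aux.AA_norm_le hFd hr ζ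
      obtain ⟨C, hC0, hC⟩ := hc 1 one_pos
      refine Summable.of_nonneg_of_le (fun k => norm_nonneg _) (fun k => ?_)
        (((Real.summable_pow_div_factorial (|a| + |b| + |r|)).mul_left (C * D)))
      rw [hiter k ζ, norm_smul]
      have h1 : ‖c k / (Nat.factorial k : ℂ) * Complex.I ^ k‖ ≤ C / Nat.factorial k := by
        rw [norm_mul, norm_pow, Complex.norm_I, one_pow, mul_one, norm_div,
          Complex.norm_natCast]
        have h2 := hC k
        rw [one_pow, mul_one] at h2
        gcongr
      calc ‖c k / (Nat.factorial k : ℂ) * Complex.I ^ k‖ * ‖Stmt17Aux.AA a b r F k ζ‖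
          ≤ (C / Nat.factorial k) * (D * (|a| + |b| + |r|) ^ k) :=
            mul_le_mul h1 (hD k) (norm_nonneg _) (by positivity)
        _ = C * D * ((|a| + |b| + |r|) ^ k / Nat.factorial k) := by ring
    · have h := Stmt17Aux.AA_hasSum hFd hr hc ζ
      have hfun2 : (fun k : ℕ => (c k / (Nat.factorial k : ℂ) * Complex.I ^ k) •
            iteratedDeriv k (fourierCpt a b r F) ζ)
          = fun k : ℕ => (c k / (Nat.factorial k : ℂ) * Complex.I ^ k) •
            Stmt17Aux.AA a b r F k ζ :=
        funext fun k => by rw [hiter k ζ]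
      rw [hfun2]
      exact h.tsum_eq.symm

end
end
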